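/- arXiv:1810.10925 — 4 statements merged into one kernel-verified Lean document; each statement's English description precedes it below -/
import Mathlib

section
/- Let g ≥ 2, h, and t be positive integers with h > g^t(g−1). Then there exists a partition of ℕ into pairwise disjoint sets W_0, W_1, …, W_{h-1} such that each W_r contains infinitely many intervals of at least t consecutive integers, and every integer n ≥ h belongs to the h-fold sumset hA_g(W_0). -/
/-- `AgSet g W` is the set of all integers of the form `∑ f ∈ F, a f * g ^ f`,
where `F` is a finite nonempty subset of `W` and `1 ≤ a f ≤ g - 1` for each `f ∈ F`. -/
def AgSet (g : ℕ) (W : Set ℕ) : Set ℕ :=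
  {n | ∃ F : Finset ℕ, F.Nonempty ∧ ↑F ⊆ W ∧ ∃ a : ℕ → ℕ,
    (∀ f ∈ F, 1 ≤ a f ∧ a f ≤ g - 1) ∧ n = ∑ f ∈ F, a f * g ^ f}

/-- `FoldSum h A` is the `h`-fold sumset `hA`, the set of all sums `a₁ + ⋯ + a_h`
with each `aᵢ ∈ A`. -/
def FoldSum (h : ℕ) (A : Set ℕ) : Set ℕ :=
  {n | ∃ x : Fin h → ℕ, (∀ i, x i ∈ A) ∧ n = ∑ i, x i}

/-- `A` is an asymptotic basis of order `h` if every sufficiently large integer lies in `hA`. -/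
def IsAsymptoticBasis (h : ℕ) (A : Set ℕ) : Prop :=
  ∀ᶠ n in Filter.atTop, n ∈ FoldSum h A

/-- `A` is a minimal asymptotic basis of order `h` if it is an asymptotic basis of order `h`
and no proper subset of `A` is an asymptotic basis of order `h`. -/
def IsMinimalAsymptoticBasis (h : ℕ) (A : Set ℕ) : Prop :=
  IsAsymptoticBasis h A ∧ ∀ B : Set ℕ, B ⊂ A → ¬ IsAsymptoticBasis h B

namespace Stmt1Aux

open Finset

def Rep (g : ℕ) (S : Set ℕ) (x : ℕ) : Prop :=
  ∃ F : Finset ℕ, ↑F ⊆ S ∧ ∃ a : ℕ → ℕ,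
    (∀ f ∈ F, 1 ≤ a f ∧ a f ≤ g - 1) ∧ x = ∑ f ∈ F, a f * g ^ f

lemma rep_zero (g : ℕ) (S : Set ℕ) : Rep g S 0 :=
  ⟨∅, by simp, fun _ => 0, by simp, by simp⟩

lemma rep_mono {g : ℕ} {S S' : Set ℕ} (hS : S ⊆ S') {x : ℕ} (hx : Rep g S x) : Rep g S' x := by
  obtain ⟨F, hF, a, ha, hxe⟩ := hx
  exact ⟨F, fun p hp => hS (hF hp), a, ha, hxe⟩

lemma rep_agset {g : ℕ} {S : Set ℕ} {x : ℕ} (hx : Rep g S x) (hx0 : x ≠ 0) :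
    x ∈ AgSet g S := by
  obtain ⟨F, hF, a, ha, hxe⟩ := hx
  refine ⟨F, ?_, hF, a, ha, hxe⟩
  rcases F.eq_empty_or_nonempty with rfl | hne
  · simp at hxe; exact absurd hxe hx0
  · exact hne

lemma digitSum (g : ℕ) (x : ℕ) :
    ∀ t : ℕ, ∑ f ∈ range t, (x / g ^ f % g) * g ^ f = x % g ^ t := by
  intro t
  induction t with
  | zero => simp [Nat.mod_one]
  | succ t ih =>
    rw [Finset.sum_range_succ, ih, Nat.mod_pow_succ]
    ring

lemma rep_window (g : ℕ) (hg : 2 ≤ g) {S : Set ℕ} (lo len x : ℕ) (hx : x < g ^ len)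
    (hS : ∀ p, lo ≤ p → p < lo + len → p ∈ S) : Rep g S (x * g ^ lo) := by
  classical
  refine ⟨((range len).filter fun f => x / g ^ f % g ≠ 0).image (· + lo), ?_,
    fun p => x / g ^ (p - lo) % g, ?_, ?_⟩
  · intro p hp
    simp only [coe_image, Set.mem_image, mem_coe, mem_filter, mem_range] at hp
    obtain ⟨f, ⟨hf, _⟩, rfl⟩ := hp
    exact hS (f + lo) (by omega) (by omega)
  · intro p hp
    simp only [mem_image, mem_filter, mem_range] at hp
    obtain ⟨f, ⟨hf, hne⟩, rfl⟩ := hp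
    simp only [Nat.add_sub_cancel]
    have := Nat.mod_lt (x / g ^ f) (show 0 < g by omega)
    omega
  · rw [Finset.sum_image (by intro a _ b _ h; exact Nat.add_right_cancel h)]
    have h1 : ∀ f ∈ (range len).filter fun f => x / g ^ f % g ≠ 0,
        (x / g ^ (f + lo - lo) % g) * g ^ (f + lo) = ((x / g ^ f % g) * g ^ f) * g ^ lo := by
      intro f _
      rw [Nat.add_sub_cancel, pow_add]; ring
    rw [Finset.sum_congr rfl h1, ← Finset.sum_mul,
      Finset.sum_filter_of_ne (by intro f _ hf hc; simp [hc] at hf),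
      digitSum, Nat.mod_eq_of_lt hx]

lemma rep_add {g : ℕ} {S T : Set ℕ} (hST : Disjoint S T) {x y : ℕ}
    (hx : Rep g S x) (hy : Rep g T y) : Rep g (S ∪ T) (x + y) := by
  classical
  obtain ⟨F, hF, a, ha, rfl⟩ := hx
  obtain ⟨F', hF', a', ha', rfl⟩ := hy
  have hd : Disjoint F F' := by
    rw [Finset.disjoint_left]
    intro p hp hp'
    exact Set.disjoint_left.mp hST (hF hp) (hF' hp')
  refine ⟨F ∪ F', by push_cast; exact Set.union_subset_union hF hF',
    fun f => if f ∈ F then a f else a' f, ?_, ?_⟩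
  · intro f hf
    rcases Finset.mem_union.mp hf with h | h
    · simp only [if_pos h]; exact ha f h
    · have : f ∉ F := fun hc => Finset.disjoint_left.mp hd hc h
      simp only [if_neg this]; exact ha' f h
  · rw [Finset.sum_union hd]
    congr 1
    · exact Finset.sum_congr rfl fun f hf => by simp [if_pos hf]
    · refine Finset.sum_congr rfl fun f hf => ?_
      have : f ∉ F := fun hc => Finset.disjoint_left.mp hd hc hf
      simp [if_neg this]

lemma rep_shrink {g : ℕ} (hg : 2 ≤ g) {S : Set ℕ} {x e : ℕ} (hx : Rep g S x) (hxe : x < g ^ e) :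
    Rep g (S ∩ {p | p < e}) x := by
  obtain ⟨F, hF, a, ha, rfl⟩ := hx
  refine ⟨F, ?_, a, ha, rfl⟩
  intro p hp
  refine ⟨hF hp, ?_⟩
  have h1 : g ^ p ≤ a p * g ^ p := Nat.le_mul_of_pos_left _ (ha p hp).1
  have h2 : a p * g ^ p ≤ ∑ f ∈ F, a f * g ^ f :=
    Finset.single_le_sum (f := fun f => a f * g ^ f) (fun i _ => Nat.zero_le _) hp
  have : g ^ p < g ^ e := lt_of_le_of_lt (h1.trans h2) hxe
  exact (Nat.pow_lt_pow_iff_right (by omega)).mp this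

lemma split_sum : ∀ (k N mx : ℕ), k ≤ N → N ≤ k * mx →
    ∃ u : ℕ → ℕ, (∀ c, c < k → 1 ≤ u c ∧ u c ≤ mx) ∧ (∀ c, k ≤ c → u c = 0) ∧
      ∑ c ∈ range k, u c = N := by
  intro k
  induction k with
  | zero =>
    intro N mx h1 h2
    exact ⟨fun _ => 0, by omega, fun _ _ => rfl, by simpa using (by omega : 0 = N)⟩
  | succ k ih =>
    intro N mx h1 h2
    have hkm : (k + 1) * mx = k * mx + mx := by ring
    have hmx : 1 ≤ mx := by
      rcases Nat.eq_zero_or_pos mx with rfl | h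
      · omega
      · exact h
    set u0 := min mx (N - k) with hu0
    have hu01 : 1 ≤ u0 := by omega
    have hu0mx : u0 ≤ mx := min_le_left _ _
    have h1' : k ≤ N - u0 := by omega
    have h2' : N - u0 ≤ k * mx := by
      have hk1 : k * 1 ≤ k * mx := Nat.mul_le_mul_left k hmx
      rcases min_cases mx (N - k) with ⟨he, hle⟩ | ⟨he, hle⟩ <;> omega
    obtain ⟨u, hu1, hu2, hu3⟩ := ih (N - u0) mx h1' h2'
    refine ⟨fun c => if c = k then u0 else u c, ?_, ?_, ?_⟩
    · intro c hc
      by_cases hck : c = k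
      · simp [hck]; omega
      · simp only [if_neg hck]; exact hu1 c (by omega)
    · intro c hc
      have : c ≠ k := by omega
      simp only [if_neg this]; exact hu2 c (by omega)
    · rw [Finset.sum_range_succ, if_pos rfl]
      have : ∑ c ∈ range k, (if c = k then u0 else u c) = ∑ c ∈ range k, u c :=
        Finset.sum_congr rfl fun c hc => if_neg (by simp at hc; omega)
      rw [this, hu3]; omega

end Stmt1Aux

namespace Stmt1Aux

open Finset

/-- Block start positions: block `k+1` occupies `[bfun h t (k+1), bfun h t (k+1) + t)`. -/
def bfun (h t i : ℕ) : ℕ := h + t + 1 + 2 * t * i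

/-- `W0` is the complement of all the blocks. -/
def W0 (h t : ℕ) : Set ℕ :=
  {x | ∀ k : ℕ, ¬ (bfun h t (k + 1) ≤ x ∧ x < bfun h t (k + 1) + t)}

lemma bfun_mono {h t : ℕ} (ht : 1 ≤ t) {i j : ℕ} (hij : i ≤ j) : bfun h t i ≤ bfun h t j := by
  unfold bfun
  have : 2 * t * i ≤ 2 * t * j := Nat.mul_le_mul_left _ hij
  omega

lemma bfun_succ (h t i : ℕ) : bfun h t (i + 1) = bfun h t i + 2 * t := by
  unfold bfun; ring

lemma W0_window {h t : ℕ} (ht : 1 ≤ t) {i p : ℕ} (h1 : bfun h t i + t ≤ p)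
    (h2 : p < bfun h t (i + 1)) : p ∈ W0 h t := by
  intro k ⟨hk1, hk2⟩
  rcases le_or_gt (k + 1) i with hle | hlt
  · have := bfun_mono (h := h) ht hle
    omega
  · have := bfun_mono (h := h) ht (show i + 1 ≤ k + 1 from hlt)
    omega

lemma W0_low {h t : ℕ} (ht : 1 ≤ t) {p : ℕ} (hp : p < bfun h t 1) : p ∈ W0 h t := by
  intro k ⟨hk1, hk2⟩
  have := bfun_mono (h := h) ht (show 1 ≤ k + 1 by omega)
  omega

lemma bfun_lt_pow {g h t : ℕ} (hg : 2 ≤ g) (i : ℕ) : bfun h t i < g ^ bfun h t i :=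
  calc bfun h t i < 2 ^ bfun h t i := Nat.lt_two_pow_self
  _ ≤ g ^ bfun h t i := Nat.pow_le_pow_left hg _

lemma key (g h t : ℕ) (hg : 2 ≤ g) (ht : 1 ≤ t) (hgh : g ^ t + 1 ≤ h) :
    ∀ M : ℕ, ∀ i : ℕ, 1 ≤ i → g ^ (bfun h t i + t) ∣ M →
    ∃ v : ℕ → ℕ, (∑ c ∈ range h, v c) = M ∧
      ∀ c, v c ≤ M ∧ Rep g (W0 h t ∩ {p | bfun h t i + t ≤ p}) (v c) := by
  have hg1 : 1 < g := hg
  have hgpos : ∀ e : ℕ, 0 < g ^ e := fun e => Nat.pow_pos (by omega)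
  have hgt2 : 2 ≤ g ^ t := le_trans hg (Nat.le_self_pow (by omega) g)
  intro M
  induction M using Nat.strong_induction_on with
  | _ M IH =>
    intro i hi hdvd
    rcases Nat.eq_zero_or_pos M with rfl | hM
    · exact ⟨fun _ => 0, by simp, fun c => ⟨le_refl 0, rep_zero g _⟩⟩
    have hMlb : g ^ (bfun h t i + t) ≤ M := Nat.le_of_dvd hM hdvd
    set P : ℕ → Prop := fun a => g ^ bfun h t a ≤ M with hP
    have hPlt : ∀ a, P a → a < M := by
      intro a ha
      have h0 : a ≤ 2 * t * a := Nat.le_mul_of_pos_left a (by omega)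
      have h1 : a ≤ bfun h t a := by unfold bfun; omega
      have h2 := bfun_lt_pow (h := h) (t := t) hg a
      have h3 : g ^ bfun h t a ≤ M := ha
      omega
    have hPi : P i := le_trans (Nat.pow_le_pow_right (by omega) (by omega)) hMlb
    set j := Nat.findGreatest P M with hj
    have hij : i ≤ j := Nat.le_findGreatest (le_of_lt (hPlt i hPi)) hPi
    have hPj : g ^ bfun h t j ≤ M := Nat.findGreatest_spec (le_of_lt (hPlt i hPi)) hPi
    have hMj : M < g ^ bfun h t (j + 1) := by
      by_contra hc
      push_neg at hc
      have hc' : P (j + 1) := hc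
      have := Nat.le_findGreatest (le_of_lt (hPlt (j+1) hc')) hc'
      omega
    rcases eq_or_lt_of_le hij with heq | hij'
    · -- single-run case
      have hMi1 : M < g ^ bfun h t (i + 1) := by rw [heq]; exact hMj
      set Q := M / g ^ (bfun h t i + t) with hQ
      have hQM : Q * g ^ (bfun h t i + t) = M := Nat.div_mul_cancel hdvd
      have hQlt : Q < g ^ t := by
        by_contra hc
        push_neg at hc
        have h1 : g ^ t * g ^ (bfun h t i + t) ≤ Q * g ^ (bfun h t i + t) :=
          Nat.mul_le_mul_right _ hc
        rw [hQM, ← pow_add] at h1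
        rw [show t + (bfun h t i + t) = bfun h t (i+1) by rw [bfun_succ]; ring] at h1
        omega
      have hrep : Rep g (W0 h t ∩ {p | bfun h t i + t ≤ p}) M := by
        rw [← hQM]
        refine rep_window g hg _ _ _ hQlt ?_
        intro p hp1 hp2
        refine ⟨W0_window ht hp1 ?_, hp1⟩
        rw [bfun_succ]; omega
      refine ⟨fun c => if c = 0 then M else 0, ?_, ?_⟩
      · rw [Finset.sum_ite_eq' (range h) 0 (fun _ => M)]
        have : (0 : ℕ) ∈ range h := by simp; omega
        simp [this]
      · intro c
        by_cases hc : c = 0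
        · simp only [if_pos hc]; exact ⟨le_refl M, hrep⟩
        · simp only [if_neg hc]; exact ⟨Nat.zero_le M, rep_zero g _⟩
    · -- main case : i < j
      have hd0 : bfun h t i + t + t ≤ bfun h t j := by
        have := bfun_mono (h := h) ht (show i + 1 ≤ j from hij')
        rw [bfun_succ] at this
        omega
      have htb : t ≤ bfun h t j := by unfold bfun; omega
      set d := bfun h t j - t with hdd
      have hdt : d + t = bfun h t j := by omega
      set q := M / g ^ bfun h t j with hq
      set r := M % g ^ bfun h t j with hr
      have hqr : g ^ bfun h t j * q + r = M := Nat.div_add_mod M _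
      have hrX : r < g ^ bfun h t j := Nat.mod_lt M (hgpos _)
      set qhi := q / g ^ t with hqhi
      set m := q % g ^ t with hm
      have hqm : g ^ t * qhi + m = q := Nat.div_add_mod q _
      have hmlt : m < g ^ t := Nat.mod_lt q (hgpos t)
      set ρ := r / g ^ d with hρ
      set rlo := r % g ^ d with hrlo
      have hrl : g ^ d * ρ + rlo = r := Nat.div_add_mod r _
      have hrlod : rlo < g ^ d := Nat.mod_lt r (hgpos d)
      have hρlt : ρ < g ^ t := by
        rw [hρ, Nat.div_lt_iff_lt_mul (hgpos d)]
        calc r < g ^ bfun h t j := hrX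
        _ = g ^ t * g ^ d := by rw [← pow_add]; congr 1; omega
      have hqhilt : qhi < g ^ t := by
        have h1 : g ^ bfun h t j * q ≤ M := by
          rw [mul_comm]; exact Nat.div_mul_le_self M _
        have h2 : M < g ^ bfun h t j * g ^ (2 * t) := by
          rw [← pow_add, ← bfun_succ]; exact hMj
        have hqlt : q < g ^ (2 * t) := by
          by_contra hc
          push_neg at hc
          have := Nat.mul_le_mul_left (g ^ bfun h t j) hc
          omega
        rw [hqhi, Nat.div_lt_iff_lt_mul (hgpos t)]
        calc q < g ^ (2 * t) := hqlt
        _ = g ^ t * g ^ t := by rw [← pow_add]; congr 1; omega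
      set w := qhi * g ^ (bfun h t j + t) with hw
      set C := m * g ^ t + ρ with hC
      have hMeq : w + C * g ^ d + rlo = M := by
        rw [← hqr, ← hqm, ← hrl, hw, hC]
        have e1 : g ^ bfun h t j = g ^ d * g ^ t := by rw [← pow_add]; congr 1; omega
        have e2 : g ^ (bfun h t j + t) = g ^ d * g ^ t * g ^ t := by
          rw [pow_add, e1]
        rw [e1, e2]
        ring
      set J := min C (m + 2) with hJ
      have hJC : J ≤ C := min_le_left _ _
      have hJh : J ≤ h := by
        have : J ≤ m + 2 := min_le_right _ _
        omega
      have hCJ : C ≤ J * (g ^ t - 1) := by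
        rcases min_cases C (m + 2) with ⟨he, hle⟩ | ⟨he, hle⟩
        · -- J = C
          rw [hJ, he]
          exact Nat.le_mul_of_pos_right C (by omega)
        · -- J = m + 2
          rw [hJ, he]
          have expand : (m + 2) * g ^ t = m * g ^ t + 2 * g ^ t := by ring
          have expand2 : (m + 2) * (g ^ t - 1) + (m + 2) = (m + 2) * g ^ t := by
            rw [← Nat.mul_succ]
            congr 1
            omega
          omega
      clear_value d q r qhi m ρ rlo w C J
      obtain ⟨cs, hcs1, hcs2, hcs3⟩ := split_sum J C (g ^ t - 1) hJC hCJ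
      -- recursive decomposition of rlo
      have hrlodvd : g ^ (bfun h t i + t) ∣ rlo := by
        have h1 : g ^ (bfun h t i + t) ∣ g ^ bfun h t j := pow_dvd_pow g (by omega)
        have h2 : g ^ (bfun h t i + t) ∣ r := by
          rw [hr]; exact (Nat.dvd_mod_iff h1).mpr hdvd
        have h3 : g ^ (bfun h t i + t) ∣ g ^ d := pow_dvd_pow g (by omega)
        rw [hrlo]; exact (Nat.dvd_mod_iff h3).mpr h2
      have hrloM : rlo < M := by
        have : g ^ d < g ^ bfun h t j := Nat.pow_lt_pow_right hg1 (by omega)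
        omega
      obtain ⟨v', hv'sum, hv'⟩ := IH rlo hrloM i hi hrlodvd
      -- assemble
      refine ⟨fun c => v' c + cs c * g ^ d + (if c = 0 then w else 0), ?_, ?_⟩
      · rw [Finset.sum_add_distrib, Finset.sum_add_distrib, hv'sum,
          Finset.sum_ite_eq' (range h) 0 (fun _ => w)]
        have h0 : (0 : ℕ) ∈ range h := by simp; omega
        rw [if_pos h0, ← Finset.sum_mul]
        have : ∑ c ∈ range h, cs c = C := by
          rw [← hcs3]
          symm
          apply Finset.sum_subset
          · exact Finset.range_subset_range.mpr hJh
          · intro c _ hc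
            simp only [mem_range, not_lt] at hc
            exact hcs2 c hc
        rw [this]
        omega
      · intro c
        dsimp only
        constructor
        · -- bound
          have hb0 : v' c ≤ rlo := (hv' c).1.trans (le_refl _)
          have hb1 : cs c * g ^ d ≤ C * g ^ d := by
            rcases lt_or_ge c J with hcJ | hcJ
            · have : cs c ≤ C := by
                rw [← hcs3]
                exact Finset.single_le_sum (f := fun e => cs e)
                  (fun e _ => Nat.zero_le _) (by simp [hcJ])
              exact Nat.mul_le_mul_right _ this
            · rw [hcs2 c hcJ]; simp
          have hb2 : (if c = 0 then w else 0) ≤ w := by split <;> omega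
          omega
        · -- Rep
          have repA : Rep g ((W0 h t ∩ {p | bfun h t i + t ≤ p}) ∩ {p | p < d}) (v' c) :=
            rep_shrink hg (hv' c).2 (lt_of_le_of_lt (hv' c).1 (lt_of_lt_of_le hrlod (le_refl _)))
          have repB : Rep g {p | (p ∈ W0 h t ∧ bfun h t i + t ≤ p) ∧ d ≤ p ∧ p < bfun h t j}
              (cs c * g ^ d) := by
            rcases lt_or_ge c J with hcJ | hcJ
            · refine rep_window g hg d t (cs c) (by have := (hcs1 c hcJ).2; omega) ?_
              intro p hp1 hp2
              have hjj : 1 ≤ j := by omega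
              have hdlow : bfun h t (j - 1) + t = d := by
                have := bfun_succ h t (j - 1)
                rw [show j - 1 + 1 = j by omega] at this
                omega
              refine ⟨⟨W0_window ht (i := j - 1) (by omega) ?_, by omega⟩, by omega, by omega⟩
              rw [show j - 1 + 1 = j by omega]
              omega
            · rw [hcs2 c hcJ]
              simpa using rep_zero g _
          have repC : Rep g {p | (p ∈ W0 h t ∧ bfun h t i + t ≤ p) ∧ bfun h t j + t ≤ p}
              (if c = 0 then w else 0) := by
            split
            · rw [hw]
              refine rep_window g hg _ _ _ hqhilt ?_
              intro p hp1 hp2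
              refine ⟨⟨W0_window ht (i := j) hp1 ?_, by omega⟩, hp1⟩
              rw [bfun_succ]; omega
            · exact rep_zero g _
          have repBC := rep_add (by
            rw [Set.disjoint_left]
            rintro p ⟨_, _, hp2⟩ ⟨_, hp3⟩
            omega) repB repC
          have repAll := rep_add (by
            rw [Set.disjoint_left]
            rintro p ⟨_, hp1⟩ hp2
            rcases hp2 with ⟨_, _, hp3⟩ | ⟨_, hp3⟩ <;> simp at hp1 ⊢ <;> omega) repA repBC
          refine rep_mono ?_ (by convert repAll using 1; ring)
          rintro p (⟨⟨hp1, hp2⟩, _⟩ | ⟨⟨hp1, hp2⟩, _⟩ | ⟨⟨hp1, hp2⟩, _⟩) <;> exact ⟨hp1, hp2⟩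

end Stmt1Aux

namespace Stmt1Aux

open Finset

lemma bfun_strict {h t : ℕ} (ht : 1 ≤ t) {i j : ℕ} (hij : i < j) : bfun h t i < bfun h t j := by
  unfold bfun
  have : 2 * t * i < 2 * t * j := (Nat.mul_lt_mul_left (by omega : 0 < 2 * t)).mpr hij
  omega

end Stmt1Aux


open Stmt1Aux Finset in
/-- For positive integers `g ≥ 2`, `h`, `t` with `h > g ^ t * (g - 1)`,
there is a partition of ℕ into pairwise disjoint sets `W 0, …, W (h-1)` such that each
`W r` contains infinitely many intervals of at least `t` consecutive integers, and every
integer `n ≥ h` belongs to the `h`-fold sumset `h A_g(W 0)`. -/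
theorem stmt1 (g h t : ℕ) (hg : 2 ≤ g) (ht : 1 ≤ t) (hh : 1 ≤ h)
    (hth : g ^ t * (g - 1) < h) :
    ∃ W : ℕ → Set ℕ,
      (⋃ r ∈ Finset.range h, W r) = Set.univ ∧
      (∀ r < h, ∀ s < h, r ≠ s → Disjoint (W r) (W s)) ∧
      (∀ r < h, {x : ℕ | ∀ j < t, x + j ∈ W r}.Infinite) ∧
      (∀ n : ℕ, h ≤ n → n ∈ FoldSum h (AgSet g (W 0))) := by
  classical
  have hg1 : 1 < g := hg
  have hgpos : ∀ e : ℕ, 0 < g ^ e := fun e => Nat.pow_pos (by omega)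
  have hgt2 : 2 ≤ g ^ t := le_trans hg (Nat.le_self_pow (by omega) g)
  have hgh : g ^ t + 1 ≤ h := by
    have h1 : g ^ t * 1 ≤ g ^ t * (g - 1) := Nat.mul_le_mul_left _ (by omega)
    omega
  have hh3 : 3 ≤ h := by omega
  refine ⟨fun r => if r = 0 then W0 h t else
      {x | ∃ k : ℕ, k % (h - 1) = r - 1 ∧ bfun h t (k + 1) ≤ x ∧ x < bfun h t (k + 1) + t},
      ?_, ?_, ?_, ?_⟩
  · -- union is univ
    ext x
    simp only [Set.mem_iUnion, Finset.mem_range, Set.mem_univ, iff_true]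
    by_cases hx : x ∈ W0 h t
    · exact ⟨0, by omega, by simp [hx]⟩
    · have hx' : ∃ k, bfun h t (k + 1) ≤ x ∧ x < bfun h t (k + 1) + t := by
        unfold W0 at hx
        push_neg at hx
        simpa using hx
      obtain ⟨k, hk1, hk2⟩ := hx'
      have hklt : k % (h - 1) < h - 1 := Nat.mod_lt k (by omega)
      refine ⟨k % (h - 1) + 1, by omega, ?_⟩
      rw [if_neg (by omega)]
      exact ⟨k, by omega, hk1, hk2⟩
  · -- pairwise disjoint
    intro r hr s hs hrs
    rw [Set.disjoint_left]
    intro x hxr hxs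
    dsimp only at hxr hxs
    by_cases hr0 : r = 0 <;> by_cases hs0 : s = 0
    · exact hrs (by omega)
    · rw [if_pos hr0] at hxr
      rw [if_neg hs0] at hxs
      obtain ⟨k, _, hk1, hk2⟩ := hxs
      exact hxr k ⟨hk1, hk2⟩
    · rw [if_neg hr0] at hxr
      rw [if_pos hs0] at hxs
      obtain ⟨k, _, hk1, hk2⟩ := hxr
      exact hxs k ⟨hk1, hk2⟩
    · rw [if_neg hr0] at hxr
      rw [if_neg hs0] at hxs
      obtain ⟨k, hk0, hk1, hk2⟩ := hxr
      obtain ⟨k', hk0', hk1', hk2'⟩ := hxs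
      have hkk : k = k' := by
        rcases lt_trichotomy k k' with hlt | heq | hgt
        · have h1 := bfun_strict (h := h) ht (show k + 1 < k' + 1 by omega)
          have h2 := bfun_succ h t (k + 1)
          have h3 := bfun_mono (h := h) ht (show k + 1 + 1 ≤ k' + 1 by omega)
          omega
        · exact heq
        · have h1 := bfun_strict (h := h) ht (show k' + 1 < k + 1 by omega)
          have h2 := bfun_succ h t (k' + 1)
          have h3 := bfun_mono (h := h) ht (show k' + 1 + 1 ≤ k + 1 by omega)
          omega
      subst hkk
      exact hrs (by omega)
  · -- infinitely many t-intervals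
    intro r hr
    by_cases hr0 : r = 0
    · subst hr0
      apply Set.infinite_of_injective_forall_mem (f := fun m : ℕ => bfun h t (m + 1) + t)
      · intro a b hab
        dsimp only at hab
        by_contra hne
        rcases lt_or_gt_of_ne hne with hlt | hlt
        · have := bfun_strict (h := h) ht (show a + 1 < b + 1 by omega); omega
        · have := bfun_strict (h := h) ht (show b + 1 < a + 1 by omega); omega
      · intro m
        simp only [Set.mem_setOf_eq]
        intro j hj
        show bfun h t (m + 1) + t + j ∈ W0 h t
        refine W0_window ht (i := m + 1) (by omega) ?_
        rw [bfun_succ h t (m + 1)]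
        omega
    · apply Set.infinite_of_injective_forall_mem
        (f := fun m : ℕ => bfun h t ((r - 1 + (h - 1) * m) + 1))
      · intro a b hab
        dsimp only at hab
        by_contra hne
        have hmul : ∀ a b : ℕ, a < b → (h - 1) * a < (h - 1) * b :=
          fun a b hab => (Nat.mul_lt_mul_left (by omega : 0 < h - 1)).mpr hab
        rcases lt_or_gt_of_ne hne with hlt | hlt
        · have h1 := hmul a b hlt
          have := bfun_strict (h := h) ht
            (show r - 1 + (h - 1) * a + 1 < r - 1 + (h - 1) * b + 1 by omega)
          omega
        · have h1 := hmul b a hlt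
          have := bfun_strict (h := h) ht
            (show r - 1 + (h - 1) * b + 1 < r - 1 + (h - 1) * a + 1 by omega)
          omega
      · intro m
        simp only [Set.mem_setOf_eq]
        intro j hj
        simp only [if_neg hr0, Set.mem_setOf_eq]
        refine ⟨r - 1 + (h - 1) * m, ?_, by omega, by omega⟩
        rw [Nat.add_mul_mod_self_left]
        exact Nat.mod_eq_of_lt (by omega)
  · -- the h-fold sumset property
    intro n hn
    show n ∈ FoldSum h (AgSet g (W0 h t))
    obtain ⟨β, hβ⟩ : ∃ β, β = bfun h t 1 + t := ⟨_, rfl⟩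
    have hdm := Nat.div_add_mod n (g ^ β)
    have hβh : h ≤ g ^ β := by
      have h1 : h < 2 ^ h := Nat.lt_two_pow_self
      have h2 : 2 ^ h ≤ 2 ^ β := Nat.pow_le_pow_right (by omega) (by rw [hβ]; unfold bfun; omega)
      have h3 : 2 ^ β ≤ g ^ β := Nat.pow_le_pow_left hg _
      omega
    obtain ⟨Q, R, hQR, hRlt⟩ : ∃ Q R : ℕ, n = g ^ β * Q + R ∧ R < g ^ β :=
      ⟨n / g ^ β, n % g ^ β, by rw [Nat.div_add_mod], Nat.mod_lt n (hgpos β)⟩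
    obtain ⟨T, M, hMT, hdvd, hTlow, hThigh⟩ :
        ∃ T M : ℕ, M + T = n ∧ g ^ β ∣ M ∧ h ≤ T ∧ T < g ^ β + h := by
      rcases le_or_gt h R with hc | hc
      · exact ⟨R, g ^ β * Q, by omega, ⟨Q, rfl⟩, hc, by omega⟩
      · have hQ1 : 1 ≤ Q := by
          by_contra hq
          push_neg at hq
          interval_cases Q <;> omega
        have hexp : g ^ β * (Q - 1) + g ^ β * 1 = g ^ β * Q := by
          rw [← Nat.mul_add]
          congr 1
          omega
        exact ⟨R + g ^ β, g ^ β * (Q - 1), by omega, ⟨Q - 1, rfl⟩, by omega, by omega⟩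
    have hTbound : T ≤ h * (g ^ bfun h t 1 - 1) := by
      obtain ⟨X, hX⟩ : ∃ X, X = g ^ bfun h t 1 := ⟨_, rfl⟩
      rw [← hX]
      have hXβ : g ^ β = g ^ t * X := by
        rw [hβ, hX, pow_add]
        ring
      have hX2h : 2 * h ≤ X := by
        have h1 : h < 2 ^ h := Nat.lt_two_pow_self
        have h2 : 2 ^ (h + 1) ≤ 2 ^ bfun h t 1 :=
          Nat.pow_le_pow_right (by omega) (by unfold bfun; omega)
        have h3 : 2 ^ bfun h t 1 ≤ X := by rw [hX]; exact Nat.pow_le_pow_left hg _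
        have h4 : 2 ^ (h + 1) = 2 * 2 ^ h := by rw [pow_succ]; ring
        omega
      have hhX : (g ^ t + 1) * X ≤ h * X := Nat.mul_le_mul_right _ hgh
      have hexp : (g ^ t + 1) * X = g ^ t * X + X := by ring
      have hXpos : 1 ≤ X := by rw [hX]; exact hgpos _
      have hmul : h * (X - 1) + h * 1 = h * X := by
        rw [← Nat.mul_add]
        congr 1
        omega
      omega
    obtain ⟨u, hu1, hu2, hu3⟩ := split_sum h T (g ^ bfun h t 1 - 1) hTlow hTbound
    rw [hβ] at hdvd
    obtain ⟨v, hvsum, hv⟩ := key g h t hg ht hgh M 1 (le_refl 1) hdvd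
    refine ⟨fun c => u c + v c, ?_, ?_⟩
    · intro c
      dsimp only
      have hcu := hu1 c c.isLt
      have hub : u (c : ℕ) < g ^ bfun h t 1 := by
        have := hgpos (bfun h t 1)
        omega
      have repu : Rep g (W0 h t ∩ {p | p < bfun h t 1}) (u c) := by
        have hw := rep_window g hg 0 (bfun h t 1) (u c) hub
          (S := W0 h t ∩ {p | p < bfun h t 1})
          (fun p hp1 hp2 => ⟨W0_low ht (by omega), by simpa using by omega⟩)
        simpa using hw
      have repv : Rep g (W0 h t ∩ {p | bfun h t 1 + t ≤ p}) (v (c : ℕ)) := (hv (c : ℕ)).2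
      have repuv := rep_add (by
        rw [Set.disjoint_left]
        rintro p ⟨_, hp1⟩ ⟨_, hp2⟩
        simp only [Set.mem_setOf_eq] at hp1 hp2
        omega) repu repv
      have repall : Rep g (W0 h t) (u c + v c) := by
        refine rep_mono ?_ repuv
        rintro p (⟨hp1, _⟩ | ⟨hp1, _⟩) <;> exact hp1
      exact rep_agset repall (by omega)
    · rw [Fin.sum_univ_eq_sum_range (fun c => u c + v c) h, Finset.sum_add_distrib,
        hu3, hvsum]
      omega
end

section
/- Let g ≥ 2 and h ≥ 2 be integers, and let ℕ = W_0 ∪ W_1 ∪ ⋯ ∪ W_{h-1} be a partition into pairwise disjoint sets with W_i ≠ ∅ for i = 0, …, h−1. Then A = A_g(W_0) ∪ A_g(W_1) ∪ ⋯ ∪ A_g(W_{h-1}) is an asymptotic basis of order h. -/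
lemma sum_digits (g : ℕ) (hg : 2 ≤ g) : ∀ (m n : ℕ), n < g ^ m →
    ∑ f ∈ Finset.range m, (n / g ^ f % g) * g ^ f = n := by
  intro m
  induction m with
  | zero =>
    intro n hn
    have : n = 0 := Nat.lt_one_iff.mp (by simpa using hn)
    simp [this]
  | succ m ih =>
    intro n hn
    have hg0 : 0 < g := by omega
    have hdiv : n / g < g ^ m := by
      rw [Nat.div_lt_iff_lt_mul hg0]
      calc n < g ^ (m+1) := hn
        _ = g ^ m * g := by ring
    have H := ih (n / g) hdiv
    rw [Finset.sum_range_succ']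
    have e1 : ∀ f : ℕ, n / g ^ (f+1) % g * g ^ (f+1) = g * ((n / g) / g ^ f % g * g ^ f) := by
      intro f
      have h2 : n / g / g ^ f = n / g ^ (f+1) := by
        rw [Nat.div_div_eq_div_mul, pow_succ']
      rw [h2, pow_succ]
      ring
    calc (∑ f ∈ Finset.range m, n / g ^ (f+1) % g * g ^ (f+1)) + n / g ^ 0 % g * g ^ 0
        = (∑ f ∈ Finset.range m, g * ((n / g) / g ^ f % g * g ^ f)) + n % g := by
          simp only [e1]; simp
      _ = g * (n / g) + n % g := by rw [← Finset.mul_sum, H]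
      _ = n := Nat.div_add_mod n g

/-- expansion list: pieces `g^u, (g-1)g^u, (g-1)g^(u+1), …, (g-1)g^(u+k-1)` summing to `g^(u+k)`. -/
def expList (g u k : ℕ) : List ℕ :=
  g ^ u :: (List.range k).map (fun i => (g - 1) * g ^ (u + i))

lemma expList_length (g u k : ℕ) : (expList g u k).length = k + 1 := by
  simp [expList]

lemma expList_sum (g : ℕ) (hg : 2 ≤ g) (u k : ℕ) : (expList g u k).sum = g ^ (u + k) := by
  induction k with
  | zero => simp [expList]
  | succ k ih =>
    rw [expList, List.range_succ, List.map_append, List.sum_cons, List.sum_append] at *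
    simp only [List.map_cons, List.map_nil, List.sum_cons, List.sum_nil] at *
    have e2 : g ^ (u + k) + (g - 1) * g ^ (u + k) = g ^ (u + (k+1)) := by
      have h1 : 1 + (g - 1) = g := by omega
      calc g ^ (u + k) + (g - 1) * g ^ (u + k) = (1 + (g-1)) * g ^ (u+k) := by ring
        _ = g ^ (u+k) * g := by rw [h1]; ring
        _ = g ^ (u + (k+1)) := by ring
    omega

lemma expList_mem (g : ℕ) (hg : 2 ≤ g) (u k : ℕ) {A : Set ℕ}
    (hsing : ∀ c f, 1 ≤ c → c ≤ g - 1 → c * g ^ f ∈ A) :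
    ∀ x ∈ expList g u k, x ∈ A := by
  intro x hx
  rw [expList, List.mem_cons] at hx
  rcases hx with h1 | h2
  · rw [h1]
    simpa using hsing 1 u le_rfl (by omega)
  · simp only [List.mem_map, List.mem_range] at h2
    obtain ⟨i, _, rfl⟩ := h2
    exact hsing (g-1) (u+i) (by omega) le_rfl

lemma topsplit (g : ℕ) (hg : 2 ≤ g) {A : Set ℕ}
    (hsing : ∀ c f, 1 ≤ c → c ≤ g - 1 → c * g ^ f ∈ A)
    (a t m : ℕ) (ha1 : 1 ≤ a) (ha2 : a ≤ g - 1) (ht1 : 1 ≤ t) (htm : t ≤ m) :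
    ∃ TL : List ℕ, TL.length = t ∧ TL.sum = a * g ^ m ∧ ∀ x ∈ TL, x ∈ A := by
  rcases eq_or_lt_of_le ha1 with h1 | h2
  · -- a = 1
    refine ⟨expList g (m - (t-1)) (t-1), ?_, ?_, expList_mem g hg _ _ hsing⟩
    · rw [expList_length]; omega
    · rw [expList_sum g hg]
      have : m - (t-1) + (t-1) = m := by omega
      rw [this, ← h1, one_mul]
  · rcases eq_or_lt_of_le ht1 with h3 | h4
    · exact ⟨[a * g ^ m], by simp [← h3], by simp, by
        intro x hx; simp at hx; rw [hx]; exact hsing a m ha1 ha2⟩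
    · -- a ≥ 2, t ≥ 2
      refine ⟨(a - 1) * g ^ m :: expList g (m - (t-2)) (t-2), ?_, ?_, ?_⟩
      · simp [expList_length]; omega
      · rw [List.sum_cons, expList_sum g hg]
        have : m - (t-2) + (t-2) = m := by omega
        rw [this]
        have h6 : a - 1 + 1 = a := by omega
        calc (a-1) * g ^ m + g ^ m = (a - 1 + 1) * g ^ m := by ring
          _ = a * g ^ m := by rw [h6]
      · intro x hx
        rcases List.mem_cons.mp hx with h5 | h6
        · rw [h5]; exact hsing (a-1) m (by omega) (by omega)
        · exact expList_mem g hg _ _ hsing x h6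

lemma foldSum_list {A : Set ℕ} {h n : ℕ} (L : List ℕ) (hlen : L.length = h)
    (hmem : ∀ x ∈ L, x ∈ A) (hsum : L.sum = n) : n ∈ FoldSum h A := by
  subst hlen hsum
  refine ⟨L.get, fun i => hmem _ (List.get_mem L i), ?_⟩
  conv_lhs => rw [← List.ofFn_get L]
  rw [List.sum_ofFn]

lemma mem_AgSet (g : ℕ) (W : Set ℕ) (F : Finset ℕ) (hF : F.Nonempty) (hFW : ↑F ⊆ W)
    (a : ℕ → ℕ) (hb : ∀ f ∈ F, 1 ≤ a f ∧ a f ≤ g - 1) :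
    (∑ f ∈ F, a f * g ^ f) ∈ AgSet g W :=
  ⟨F, hF, hFW, a, hb, rfl⟩


/-- If `g ≥ 2`, `h ≥ 2` and ℕ is partitioned into pairwise disjoint nonempty
sets `W 0, …, W (h-1)`, then `A = A_g(W 0) ∪ ⋯ ∪ A_g(W (h-1))` is an asymptotic basis of
order `h`. -/
theorem stmt4 (g h : ℕ) (hg : 2 ≤ g) (hh : 2 ≤ h) (W : ℕ → Set ℕ)
    (hcover : (⋃ r ∈ Finset.range h, W r) = Set.univ)
    (hdisj : ∀ r < h, ∀ s < h, r ≠ s → Disjoint (W r) (W s))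
    (hne : ∀ r < h, (W r).Nonempty) :
    IsAsymptoticBasis h (⋃ r ∈ Finset.range h, AgSet g (W r)) := by
  have hr' : ∀ f : ℕ, ∃ s, s < h ∧ f ∈ W s := by
    intro f
    have hmem : f ∈ ⋃ r ∈ Finset.range h, W r := by rw [hcover]; trivial
    simp only [Set.mem_iUnion, Finset.mem_range] at hmem
    obtain ⟨s, hs, hf⟩ := hmem
    exact ⟨s, hs, hf⟩
  choose r hrh hrW using hr'
  set A := ⋃ r ∈ Finset.range h, AgSet g (W r) with hA
  have hsub : ∀ s, s < h → AgSet g (W s) ⊆ A := by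
    intro s hs x hx
    rw [hA]
    simp only [Set.mem_iUnion, Finset.mem_range]
    exact ⟨s, hs, hx⟩
  have hsing : ∀ c f, 1 ≤ c → c ≤ g - 1 → c * g ^ f ∈ A := by
    intro c f hc1 hc2
    apply hsub (r f) (hrh f)
    have he : c * g ^ f = ∑ x ∈ ({f} : Finset ℕ), c * g ^ x := by simp
    rw [he]
    exact mem_AgSet g (W (r f)) {f} (by simp) (by simpa using hrW f) (fun _ => c)
      (by intro x hx; exact ⟨hc1, hc2⟩)
  rw [IsAsymptoticBasis, Filter.eventually_atTop]
  refine ⟨g ^ h, fun n hn => ?_⟩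
  have hg1 : 1 < g := hg
  have hn0 : n ≠ 0 := by
    have : 0 < g ^ h := pow_pos (by omega) h
    omega
  set m := Nat.log g n with hm
  have hmh : h ≤ m := (Nat.le_log_iff_pow_le hg1 hn0).mpr hn
  have hnm : g ^ m ≤ n := Nat.pow_log_le_self g hn0
  have hnm2 : n < g ^ (m + 1) := Nat.lt_pow_succ_log_self hg1 n
  set a := n / g ^ m with ha
  set n0 := n % g ^ m with hn0'
  have hgm0 : 0 < g ^ m := pow_pos (by omega) m
  have hsplit : a * g ^ m + n0 = n := by
    rw [ha, hn0', mul_comm]; exact Nat.div_add_mod n (g ^ m)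
  have ha1 : 1 ≤ a := (Nat.one_le_div_iff hgm0).mpr hnm
  have ha2 : a ≤ g - 1 := by
    have hlt : a < g := by
      rw [ha, Nat.div_lt_iff_lt_mul hgm0]
      calc n < g ^ (m + 1) := hnm2
        _ = g * g ^ m := by ring
    omega
  have hn0lt : n0 < g ^ m := Nat.mod_lt _ hgm0
  set d : ℕ → ℕ := fun f => n0 / g ^ f % g with hd
  set S0 := (Finset.range m).filter (fun f => d f ≠ 0) with hS0
  have hrep : ∑ f ∈ S0, d f * g ^ f = n0 := by
    rw [hS0, Finset.sum_filter_of_ne, sum_digits g hg m n0 hn0lt]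
    intro x hx hne' h0
    exact hne' (by rw [h0, zero_mul])
  have hd1 : ∀ f ∈ S0, 1 ≤ d f := by
    intro f hf
    have := (Finset.mem_filter.mp hf).2
    omega
  have hdub : ∀ f, d f ≤ g - 1 := by
    intro f
    have : d f < g := Nat.mod_lt _ (by omega)
    omega
  have hS0m : ∀ f ∈ S0, f < m := by
    intro f hf
    exact Finset.mem_range.mp (Finset.mem_filter.mp hf).1
  set K := S0.image r with hK
  have hKsub : K ⊆ Finset.range h := by
    intro s hs
    obtain ⟨f, _, rfl⟩ := Finset.mem_image.mp hs
    exact Finset.mem_range.mpr (hrh f)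
  have hjh : K.card ≤ h := by
    have := Finset.card_le_card hKsub
    simpa using this
  set piece : ℕ → ℕ := fun s => ∑ f ∈ S0.filter (fun f => r f = s), d f * g ^ f with hpiece
  have hfib : ∑ s ∈ K, piece s = n0 := by
    rw [hpiece, Finset.sum_fiberwise_of_maps_to (fun f hf => Finset.mem_image_of_mem r hf)]
    exact hrep
  have hpieceA : ∀ s ∈ K, piece s ∈ A := by
    intro s hs
    obtain ⟨f0, hf0, rfl⟩ := Finset.mem_image.mp hs
    apply hsub (r f0) (hrh f0)
    apply mem_AgSet
    · exact ⟨f0, Finset.mem_filter.mpr ⟨hf0, rfl⟩⟩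
    · intro f hf
      have hf' := Finset.mem_filter.mp (Finset.mem_coe.mp hf)
      rw [← hf'.2]
      exact hrW f
    · intro f hf
      have hf' := Finset.mem_filter.mp hf
      exact ⟨hd1 f hf'.1, hdub f⟩
  rcases lt_or_eq_of_le hjh with hcase | hcase
  · -- j < h : class pieces plus topsplit of a * g^m
    obtain ⟨TL, hTL1, hTL2, hTL3⟩ := topsplit g hg hsing a (h - K.card) m ha1 ha2
      (by omega) (by omega)
    apply foldSum_list (K.toList.map piece ++ TL)
    · rw [List.length_append, List.length_map, Finset.length_toList, hTL1]
      omega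
    · intro x hx
      rcases List.mem_append.mp hx with h1 | h2
      · obtain ⟨s, hs, rfl⟩ := List.mem_map.mp h1
        exact hpieceA s (Finset.mem_toList.mp hs)
      · exact hTL3 x h2
    · rw [List.sum_append, Finset.sum_map_toList, hfib, hTL2, add_comm]
      exact hsplit
  · -- j = h : all classes hit, merge top into class r m
    have hKeq : K = Finset.range h := Finset.eq_of_subset_of_card_le hKsub
      (by rw [hcase, Finset.card_range])
    apply foldSum_list ((Finset.range h).toList.map
      (fun s => (if r m = s then a * g ^ m else 0) + piece s))
    · rw [List.length_map, Finset.length_toList, Finset.card_range]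
    · intro x hx
      obtain ⟨s, hs, rfl⟩ := List.mem_map.mp hx
      have hsK : s ∈ K := by rw [hKeq]; exact Finset.mem_toList.mp hs
      by_cases hc : r m = s
      · rw [if_pos hc]
        have hsh : s < h := Finset.mem_range.mp (hKsub hsK)
        apply hsub s hsh
        have hnotmem : m ∉ S0.filter (fun f => r f = s) := by
          intro hmem
          exact absurd (hS0m m (Finset.mem_filter.mp hmem).1) (by omega)
        have he : a * g ^ m + piece s
            = ∑ f ∈ insert m (S0.filter (fun f => r f = s)),
                (if f = m then a else d f) * g ^ f := by
          rw [Finset.sum_insert hnotmem, if_pos rfl]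
          congr 1
          apply Finset.sum_congr rfl
          intro f hf
          have : f ≠ m := by
            have := hS0m f (Finset.mem_filter.mp hf).1
            omega
          rw [if_neg this]
        rw [he]
        apply mem_AgSet
        · exact ⟨m, Finset.mem_insert_self _ _⟩
        · intro f hf
          rcases Finset.mem_insert.mp (Finset.mem_coe.mp hf) with rfl | hf'
          · rw [← hc]; exact hrW m
          · rw [← (Finset.mem_filter.mp hf').2]; exact hrW f
        · intro f hf
          rcases Finset.mem_insert.mp hf with rfl | hf'
          · rw [if_pos rfl]; exact ⟨ha1, ha2⟩
          · have hfm : f ≠ m := by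
              have := hS0m f (Finset.mem_filter.mp hf').1
              omega
            rw [if_neg hfm]
            exact ⟨hd1 f (Finset.mem_filter.mp hf').1, hdub f⟩
      · rw [if_neg hc, zero_add]
        exact hpieceA s hsK
    · rw [Finset.sum_map_toList, Finset.sum_add_distrib, Finset.sum_ite_eq, if_pos
        (Finset.mem_range.mpr (hrh m)), ← hKeq, hfib]
      exact hsplit
end

section
/- Let g ≥ 2 and h ≥ 2 be integers, and let t be an integer with t ≥ 2 and g^t > h (equivalently t > max{1, log h / log g}). Let ℕ = W_0 ∪ W_1 ∪ ⋯ ∪ W_{h-1} be a partition into pairwise disjoint sets such that each W_i is infinite and contains an interval of t consecutive integers, for i = 0, 1, …, h−1. Then A = A_g(W_0) ∪ A_g(W_1) ∪ ⋯ ∪ A_g(W_{h-1}) is a minimal asymptotic basis of order h. -/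
namespace Stmt5Aux
open Finset

variable {g : ℕ}

/-- base-`g` digit of `n` at position `p` -/
def dig (g n p : ℕ) : ℕ := n / g ^ p % g

lemma dig_lt (hg : 2 ≤ g) (n p : ℕ) : dig g n p < g :=
  Nat.mod_lt _ (by omega)

lemma dig_le (hg : 2 ≤ g) (n p : ℕ) : dig g n p ≤ g - 1 := by
  have := dig_lt hg n p; omega

lemma geom_sum (hg : 2 ≤ g) (K : ℕ) :
    ∑ p ∈ range K, (g - 1) * g ^ p = g ^ K - 1 := by
  induction K with
  | zero => simp
  | succ K ih =>
      rw [sum_range_succ, ih]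
      have h1 : 1 ≤ g ^ K := Nat.one_le_pow _ _ (by omega)
      have h2 : (g - 1) * g ^ K = g * g ^ K - g ^ K := by
        rw [Nat.sub_mul]; simp
      have h3 : g ^ (K + 1) = g * g ^ K := by rw [pow_succ, mul_comm]
      have h4 : g ^ K ≤ g * g ^ K := Nat.le_mul_of_pos_left _ (by omega)
      omega

lemma val_lt (hg : 2 ≤ g) (s : Finset ℕ) (c : ℕ → ℕ) (K : ℕ)
    (hc : ∀ p ∈ s, c p ≤ g - 1) (hK : ∀ p ∈ s, p < K) :
    ∑ p ∈ s, c p * g ^ p < g ^ K := by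
  have h1 : ∑ p ∈ s, c p * g ^ p ≤ ∑ p ∈ s, (g - 1) * g ^ p :=
    Finset.sum_le_sum fun p hp => Nat.mul_le_mul_right _ (hc p hp)
  have h2 : ∑ p ∈ s, (g - 1) * g ^ p ≤ ∑ p ∈ range K, (g - 1) * g ^ p :=
    Finset.sum_le_sum_of_subset (fun p hp => mem_range.2 (hK p hp))
  have h3 := geom_sum hg K
  have h4 : 1 ≤ g ^ K := Nat.one_le_pow _ _ (by omega)
  omega

lemma dig_val (hg : 2 ≤ g) (s : Finset ℕ) (c : ℕ → ℕ)
    (hc : ∀ p ∈ s, c p ≤ g - 1) (q : ℕ) :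
    dig g (∑ p ∈ s, c p * g ^ p) q = if q ∈ s then c q else 0 := by
  classical
  set Cq := if q ∈ s then c q else 0 with hCq
  set L := ∑ p ∈ s.filter (· < q), c p * g ^ p with hL
  set H := ∑ p ∈ (s.filter fun p => ¬ p < q).filter (fun p => ¬ p = q),
      c p * g ^ (p - q - 1) with hH
  have hsplit : ∑ p ∈ s, c p * g ^ p = L + (Cq * g ^ q + g ^ (q+1) * H) := by
    rw [← Finset.sum_filter_add_sum_filter_not s (· < q)]
    congr 1
    rw [← Finset.sum_filter_add_sum_filter_not (s.filter fun p => ¬ p < q)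
      (fun p => p = q)]
    congr 1
    · by_cases hq : q ∈ s
      · have he : (s.filter fun p => ¬ p < q).filter (fun p => p = q) = {q} := by
          ext p
          simp only [mem_filter, mem_singleton]
          constructor
          · rintro ⟨⟨_, _⟩, rfl⟩; rfl
          · rintro rfl; exact ⟨⟨hq, by omega⟩, rfl⟩
        rw [he, hCq, if_pos hq, Finset.sum_singleton]
      · have he : (s.filter fun p => ¬ p < q).filter (fun p => p = q) = ∅ := by
          ext p
          simp only [mem_filter, notMem_empty, iff_false]
          rintro ⟨⟨hp, _⟩, rfl⟩; exact hq hp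
        rw [he, hCq, if_neg hq, Finset.sum_empty, zero_mul]
    · rw [hH, Finset.mul_sum]
      apply Finset.sum_congr rfl
      intro p hp
      simp only [mem_filter] at hp
      have hpq : q < p := by omega
      have : g ^ p = g ^ (q + 1) * g ^ (p - q - 1) := by
        rw [← pow_add]; congr 1; omega
      rw [this]; ring
  rw [hsplit]
  have hLlt : L < g ^ q := by
    apply val_lt hg _ _ _ (fun p hp => hc p (Finset.mem_filter.1 hp).1)
    intro p hp; exact (Finset.mem_filter.1 hp).2
  have hX : L + (Cq * g ^ q + g ^ (q+1) * H) = L + g ^ q * (Cq + g * H) := by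
    rw [pow_succ]; ring
  rw [hX]
  unfold dig
  rw [Nat.add_mul_div_left _ _ (Nat.pow_pos (by omega) : 0 < g ^ q),
    Nat.div_eq_of_lt hLlt, zero_add, Nat.add_mul_mod_self_left]
  apply Nat.mod_eq_of_lt
  rw [hCq]
  split
  · rename_i hq; have := hc q hq; omega
  · omega

lemma dig_helper (hg : 2 ≤ g) {n K p : ℕ} (hp : p < K) :
    dig g (n % g ^ K) p = dig g n p := by
  have key : ∀ a Q : ℕ, a < g ^ K → dig g (a + g ^ K * Q) p = dig g a p := by
    intro a Q _
    unfold dig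
    set D := K - p - 1 with hD
    have h1 : g ^ K * Q = g ^ p * (g * (g ^ D * Q)) := by
      have hKe : K = p + 1 + D := by omega
      rw [hKe, pow_add, pow_add, pow_one]; ring
    rw [h1, Nat.add_mul_div_left _ _ (Nat.pow_pos (by omega) : 0 < g ^ p),
      Nat.add_mul_mod_self_left]
  conv_rhs => rw [← Nat.mod_add_div n (g ^ K)]
  rw [key _ _ (Nat.mod_lt _ (Nat.pow_pos (by omega) : 0 < g ^ K))]

lemma sum_dig (hg : 2 ≤ g) : ∀ (K n : ℕ), n < g ^ K →
    ∑ p ∈ range K, dig g n p * g ^ p = n := by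
  intro K
  induction K with
  | zero =>
      intro n hn
      rw [pow_zero] at hn
      simp only [Finset.range_zero, Finset.sum_empty]
      omega
  | succ K ih =>
      intro n hn
      rw [Finset.sum_range_succ]
      have hgK : 0 < g ^ K := Nat.pow_pos (by omega)
      have hmod : n % g ^ K < g ^ K := Nat.mod_lt _ hgK
      have h1 : ∑ p ∈ range K, dig g n p * g ^ p = n % g ^ K := by
        rw [← ih (n % g ^ K) hmod]
        exact Finset.sum_congr rfl fun p hp =>
          by rw [dig_helper hg (Finset.mem_range.1 hp)]
      rw [h1]
      have hps : g ^ K * g = g ^ (K + 1) := by rw [pow_succ]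
      have h2 : dig g n K = n / g ^ K := by
        unfold dig
        apply Nat.mod_eq_of_lt
        rw [Nat.div_lt_iff_lt_mul hgK, mul_comm g, hps]
        exact hn
      rw [h2, Nat.mod_add_div' n (g ^ K)]

lemma eq_of_dig_eq (hg : 2 ≤ g) {m m' : ℕ} (h : ∀ p, dig g m p = dig g m' p) :
    m = m' := by
  have h1 : (1 : ℕ) < g := by omega
  set K := max (Nat.log g m) (Nat.log g m') + 1 with hK
  have hm : m < g ^ K := lt_of_lt_of_le (Nat.lt_pow_succ_log_self h1 m)
    (Nat.pow_le_pow_right (by omega) (by omega))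
  have hm' : m' < g ^ K := lt_of_lt_of_le (Nat.lt_pow_succ_log_self h1 m')
    (Nat.pow_le_pow_right (by omega) (by omega))
  rw [← sum_dig hg K m hm, ← sum_dig hg K m' hm']
  exact Finset.sum_congr rfl fun p _ => by rw [h p]

lemma dig_log_ne_zero (hg : 2 ≤ g) {n : ℕ} (hn : 0 < n) :
    dig g n (Nat.log g n) ≠ 0 := by
  unfold dig
  have h1 : g ^ Nat.log g n ≤ n := Nat.pow_log_le_self g (by omega)
  have h2 : n < g ^ (Nat.log g n + 1) := Nat.lt_pow_succ_log_self (by omega) n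
  have h3 : 1 ≤ n / g ^ Nat.log g n :=
    (Nat.one_le_div_iff (Nat.pow_pos (by omega) : 0 < g ^ Nat.log g n)).2 h1
  have h4 : n / g ^ Nat.log g n < g := by
    rw [Nat.div_lt_iff_lt_mul (Nat.pow_pos (by omega) : 0 < g ^ Nat.log g n)]
    have hps : g * g ^ Nat.log g n = g ^ (Nat.log g n + 1) := by
      rw [pow_succ, mul_comm]
    rw [hps]; exact h2
  rw [Nat.mod_eq_of_lt h4]; omega

lemma dig_zero_of_log_lt (hg : 2 ≤ g) {n p : ℕ} (hp : Nat.log g n < p) :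
    dig g n p = 0 := by
  unfold dig
  have : n < g ^ p := by
    rcases Nat.eq_zero_or_pos n with rfl | hn
    · exact Nat.pow_pos (by omega)
    · calc n < g ^ (Nat.log g n + 1) := Nat.lt_pow_succ_log_self (by omega) n
        _ ≤ g ^ p := Nat.pow_le_pow_right (by omega) (by omega)
  rw [Nat.div_eq_of_lt this]; simp

/-- membership characterization of `AgSet` via digits -/
lemma mem_AgSet_iff (hg : 2 ≤ g) {V : Set ℕ} {u : ℕ} :
    u ∈ AgSet g V ↔ 0 < u ∧ ∀ p, dig g u p ≠ 0 → p ∈ V := by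
  constructor
  · rintro ⟨F, hFne, hFV, a, ha, rfl⟩
    constructor
    · obtain ⟨p₀, hp₀⟩ := hFne
      have h1 : a p₀ * g ^ p₀ ≤ ∑ f ∈ F, a f * g ^ f :=
        Finset.single_le_sum (f := fun f => a f * g ^ f)
          (fun i _ => Nat.zero_le _) hp₀
      have h2 : 1 ≤ a p₀ := (ha p₀ hp₀).1
      have h3 : 1 ≤ g ^ p₀ := Nat.one_le_pow _ _ (by omega)
      have : 1 ≤ a p₀ * g ^ p₀ := Nat.one_le_iff_ne_zero.2 (by positivity)
      omega
    · intro p hp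
      rw [dig_val hg F a (fun q hq => (ha q hq).2) p] at hp
      split at hp
      · rename_i hmem; exact hFV hmem
      · exact absurd rfl hp
  · rintro ⟨hu, hV⟩
    have h1 : (1:ℕ) < g := by omega
    set K := Nat.log g u + 1 with hKdef
    refine ⟨(range K).filter (fun p => dig g u p ≠ 0), ?_, ?_, dig g u, ?_, ?_⟩
    · refine ⟨Nat.log g u, ?_⟩
      rw [mem_filter, mem_range]
      exact ⟨by omega, dig_log_ne_zero hg hu⟩
    · intro p hp
      rw [Finset.coe_filter] at hp
      exact hV p hp.2
    · intro f hf
      rw [mem_filter] at hf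
      exact ⟨Nat.one_le_iff_ne_zero.2 hf.2, dig_le hg u f⟩
    · refine Eq.symm ?_
      rw [Finset.sum_filter_of_ne (fun x _ hx => ?_)]
      · exact sum_dig hg K u (Nat.lt_pow_succ_log_self h1 u)
      · intro hz; rw [hz, zero_mul] at hx; exact hx rfl

lemma single_mem_AgSet (hg : 2 ≤ g) {W : Set ℕ} {a p : ℕ}
    (ha1 : 1 ≤ a) (ha2 : a ≤ g - 1) (hp : p ∈ W) :
    a * g ^ p ∈ AgSet g W := by
  refine ⟨{p}, Finset.singleton_nonempty p, by simpa using hp, fun _ => a,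
    fun f hf => ?_, by simp⟩
  rw [Finset.mem_singleton] at hf
  exact ⟨ha1, ha2⟩

lemma mem_bigA {h : ℕ} {W : ℕ → Set ℕ} {r u : ℕ} (hr : r < h)
    (hu : u ∈ AgSet g (W r)) : u ∈ ⋃ r ∈ Finset.range h, AgSet g (W r) :=
  Set.mem_iUnion.2 ⟨r, Set.mem_iUnion.2 ⟨Finset.mem_range.2 hr, hu⟩⟩

lemma grouping (hg : 2 ≤ g) (h : ℕ) (W : ℕ → Set ℕ) (cl : ℕ → ℕ)
    (hcl : ∀ p, cl p < h ∧ p ∈ W (cl p)) :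
    ∀ (N : ℕ) (s : Finset ℕ) (c : ℕ → ℕ),
    (∀ p ∈ s, 1 ≤ c p ∧ c p ≤ 2 * (g - 1)) →
    (∀ p ∈ s, ∀ q ∈ s, g - 1 < c p → g - 1 < c q → p = q) →
    (s.image cl).card + (if ∃ p ∈ s, g - 1 < c p then 1 else 0) ≤ N →
    N ≤ ∑ p ∈ s, c p →
    ∃ l : List ℕ, l.length = N ∧
      (∀ u ∈ l, u ∈ ⋃ r ∈ Finset.range h, AgSet g (W r)) ∧
      l.sum = ∑ p ∈ s, c p * g ^ p := by
  classical
  intro N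
  induction N with
  | zero =>
      intro s c hc1 hc2 hμ hunits
      have hs : s = ∅ := by
        by_contra hne
        obtain ⟨p, hp⟩ := Finset.nonempty_iff_ne_empty.2 hne
        have : cl p ∈ s.image cl := Finset.mem_image_of_mem cl hp
        have : 0 < (s.image cl).card := Finset.card_pos.2 ⟨_, this⟩
        omega
      subst hs
      exact ⟨[], rfl, by simp, by simp⟩
  | succ N ih =>
      intro s c hc1 hc2 hμ hunits
      have hsne : s.Nonempty := by
        by_contra hne
        rw [Finset.not_nonempty_iff_eq_empty] at hne
        subst hne; simp at hunits
      by_cases hbase : (s.image cl).card + (if ∃ p ∈ s, g - 1 < c p then 1 else 0) = N + 1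
      · -- base construction
        set cap : ℕ → ℕ := fun p => min (c p) (g - 1) with hcap
        set G : ℕ → ℕ := fun r => ∑ p ∈ s.filter (fun p => cl p = r), cap p * g ^ p
          with hG
        set l₁ : List ℕ := (Multiset.map G (s.image cl).val).toList with hl₁
        have hlen₁ : l₁.length = (s.image cl).card := by
          rw [hl₁, Multiset.length_toList, Multiset.card_map]
          rfl
        have hsum₁ : l₁.sum = ∑ p ∈ s, cap p * g ^ p := by
          rw [hl₁, Multiset.sum_toList]
          rw [← Finset.sum_fiberwise_of_maps_to (fun p hp => Finset.mem_image_of_mem cl hp)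
            (fun p => cap p * g ^ p)]
          rfl
        have hmem₁ : ∀ u ∈ l₁, u ∈ ⋃ r ∈ Finset.range h, AgSet g (W r) := by
          intro u hu
          rw [hl₁, Multiset.mem_toList, Multiset.mem_map] at hu
          obtain ⟨r, hr, rfl⟩ := hu
          have hrim : r ∈ s.image cl := hr
          rw [Finset.mem_image] at hrim
          obtain ⟨p, hps, hpr⟩ := hrim
          refine mem_bigA (hpr ▸ (hcl p).1) ?_
          refine ⟨s.filter (fun p => cl p = r), ⟨p, Finset.mem_filter.2 ⟨hps, hpr⟩⟩,
            ?_, cap, fun q hq => ?_, rfl⟩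
          · intro q hq
            rw [Finset.coe_filter] at hq
            have := (hcl q).2
            rw [hq.2] at this
            exact this
          · have hq' := (hc1 q (Finset.mem_filter.1 hq).1).1
            constructor
            · simp only [hcap, le_min_iff]; omega
            · exact min_le_right _ _
        by_cases hov : ∃ p ∈ s, g - 1 < c p
        · obtain ⟨p₀, hp₀s, hp₀⟩ := hov
          have hbit : (if ∃ p ∈ s, g - 1 < c p then 1 else 0) = 1 :=
            if_pos ⟨p₀, hp₀s, hp₀⟩
          refine ⟨l₁ ++ [(c p₀ - (g-1)) * g ^ p₀], ?_, ?_, ?_⟩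
          · rw [List.length_append, hlen₁]
            simp only [List.length_singleton]
            omega
          · intro u hu
            rw [List.mem_append] at hu
            rcases hu with hu | hu
            · exact hmem₁ u hu
            · rw [List.mem_singleton] at hu
              subst hu
              refine mem_bigA (hcl p₀).1 ?_
              exact single_mem_AgSet hg (by omega) (by have := (hc1 p₀ hp₀s).2; omega)
                (hcl p₀).2
          · rw [List.sum_append, hsum₁, List.sum_singleton]
            rw [← Finset.sum_erase_add s _ hp₀s, ← Finset.sum_erase_add s
              (fun p => c p * g ^ p) hp₀s]
            have hcongr : ∑ p ∈ s.erase p₀, cap p * g ^ p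
                = ∑ p ∈ s.erase p₀, c p * g ^ p := by
              apply Finset.sum_congr rfl
              intro p hp
              have hps := Finset.mem_of_mem_erase hp
              have hpne := Finset.ne_of_mem_erase hp
              have : c p ≤ g - 1 := by
                by_contra hgt
                exact hpne (hc2 p hps p₀ hp₀s (by omega) hp₀)
              simp only [hcap]; rw [min_eq_left this]
            rw [hcongr, add_assoc]
            congr 1
            have : cap p₀ = g - 1 := by simp only [hcap]; omega
            rw [this, ← Nat.add_mul]
            congr 1
            omega
        · have hbit : (if ∃ p ∈ s, g - 1 < c p then 1 else 0) = 0 := if_neg hov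
          refine ⟨l₁, by omega, hmem₁, ?_⟩
          rw [hsum₁]
          apply Finset.sum_congr rfl
          intro p hp
          have : c p ≤ g - 1 := by
            by_contra hgt
            exact hov ⟨p, hp, by omega⟩
          simp only [hcap]; rw [min_eq_left this]
      · -- peel a unit
        obtain ⟨p₁, hp₁⟩ := hsne
        have hcp₁ : 1 ≤ c p₁ := (hc1 p₁ hp₁).1
        set c' : ℕ → ℕ := fun q => if q = p₁ then c p₁ - 1 else c q with hc'
        set s' : Finset ℕ := if c p₁ = 1 then s.erase p₁ else s with hs'
        have hsub : s' ⊆ s := by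
          rw [hs']; split
          · exact Finset.erase_subset _ _
          · exact Finset.Subset.refl s
        have hc'le : ∀ q, c' q ≤ c q := by
          intro q
          simp only [hc']
          split_ifs with hq
          · subst hq; omega
          · exact le_rfl
        have hc1' : ∀ p ∈ s', 1 ≤ c' p ∧ c' p ≤ 2 * (g - 1) := by
          intro p hp
          have hps := hsub hp
          have h0 := hc1 p hps
          simp only [hc']
          split_ifs with hq
          · subst hq
            refine ⟨?_, by omega⟩
            rw [hs'] at hp
            by_cases h1 : c p = 1
            · rw [if_pos h1] at hp
              exact absurd rfl (Finset.ne_of_mem_erase hp)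
            · omega
          · exact h0
        have hc2' : ∀ p ∈ s', ∀ q ∈ s', g - 1 < c' p → g - 1 < c' q → p = q := by
          intro p hp q hq h1 h2
          apply hc2 p (hsub hp) q (hsub hq)
          · exact lt_of_lt_of_le h1 (hc'le p)
          · exact lt_of_lt_of_le h2 (hc'le q)
        have hμ' : (s'.image cl).card + (if ∃ p ∈ s', g - 1 < c' p then 1 else 0) ≤ N := by
          have h1 : (s'.image cl).card ≤ (s.image cl).card :=
            Finset.card_le_card (Finset.image_subset_image hsub)
          have h2 : (if ∃ p ∈ s', g - 1 < c' p then 1 else 0)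
              ≤ (if ∃ p ∈ s, g - 1 < c p then 1 else 0) := by
            split
            · rename_i hex
              obtain ⟨p, hp, hcp⟩ := hex
              rw [if_pos ⟨p, hsub hp, lt_of_lt_of_le hcp (hc'le p)⟩]
            · omega
          omega
        have e2 : c' p₁ = c p₁ - 1 := by simp [hc']
        have hcongr1 : ∑ p ∈ s.erase p₁, c' p = ∑ p ∈ s.erase p₁, c p :=
          Finset.sum_congr rfl fun p hp => by
            simp only [hc']; rw [if_neg (Finset.ne_of_mem_erase hp)]
        have hcongr2 : ∑ p ∈ s.erase p₁, c' p * g ^ p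
            = ∑ p ∈ s.erase p₁, c p * g ^ p :=
          Finset.sum_congr rfl fun p hp => by
            simp only [hc']; rw [if_neg (Finset.ne_of_mem_erase hp)]
        have hsum' : ∑ p ∈ s', c' p = (∑ p ∈ s, c p) - 1 := by
          by_cases h1 : c p₁ = 1
          · have hs'e : s' = s.erase p₁ := by rw [hs', if_pos h1]
            rw [hs'e, hcongr1, ← Finset.sum_erase_add s c hp₁, h1]
            omega
          · have hs'e : s' = s := by rw [hs', if_neg h1]
            rw [hs'e, ← Finset.sum_erase_add s c hp₁, ← Finset.sum_erase_add s c' hp₁,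
              hcongr1, e2]
            omega
        have hunits' : N ≤ ∑ p ∈ s', c' p := by
          rw [hsum']; omega
        obtain ⟨l, hlen, hmem, hsum⟩ := ih s' c' hc1' hc2' hμ' hunits'
        refine ⟨(1 * g ^ p₁) :: l, by simp [hlen], ?_, ?_⟩
        · intro u hu
          rcases List.mem_cons.1 hu with rfl | hu
          · exact mem_bigA (hcl p₁).1
              (single_mem_AgSet hg (le_refl 1) (by omega) (hcl p₁).2)
          · exact hmem u hu
        · rw [List.sum_cons, hsum]
          have hval' : ∑ p ∈ s', c' p * g ^ p
              = (∑ p ∈ s, c p * g ^ p) - g ^ p₁ := by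
            by_cases h1 : c p₁ = 1
            · have hs'e : s' = s.erase p₁ := by rw [hs', if_pos h1]
              have hx : ∑ p ∈ s, c p * g ^ p
                  = ∑ p ∈ s.erase p₁, c p * g ^ p + c p₁ * g ^ p₁ :=
                (Finset.sum_erase_add s (fun p => c p * g ^ p) hp₁).symm
              rw [hs'e, hcongr2, hx, h1, one_mul]
              omega
            · have hs'e : s' = s := by rw [hs', if_neg h1]
              have hx : ∑ p ∈ s, c p * g ^ p
                  = ∑ p ∈ s.erase p₁, c p * g ^ p + c p₁ * g ^ p₁ :=
                (Finset.sum_erase_add s (fun p => c p * g ^ p) hp₁).symm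
              have hy : ∑ p ∈ s, c' p * g ^ p
                  = ∑ p ∈ s.erase p₁, c' p * g ^ p + c' p₁ * g ^ p₁ :=
                (Finset.sum_erase_add s (fun p => c' p * g ^ p) hp₁).symm
              rw [hs'e, hy, hcongr2, hx, e2]
              have h2 : (c p₁ - 1) * g ^ p₁ = c p₁ * g ^ p₁ - g ^ p₁ := by
                rw [Nat.sub_mul, one_mul]
              have h3 : g ^ p₁ ≤ c p₁ * g ^ p₁ :=
                Nat.le_mul_of_pos_left _ (by omega)
              omega
          rw [hval', one_mul]
          have hle : g ^ p₁ ≤ ∑ p ∈ s, c p * g ^ p := by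
            calc g ^ p₁ ≤ c p₁ * g ^ p₁ := Nat.le_mul_of_pos_left _ (by omega)
              _ ≤ ∑ p ∈ s, c p * g ^ p :=
                Finset.single_le_sum (f := fun p => c p * g ^ p)
                  (fun i _ => Nat.zero_le _) hp₁
          omega
lemma foldsum_of_list {h : ℕ} {A : Set ℕ} {l : List ℕ} (hl : l.length = h)
    (hmem : ∀ u ∈ l, u ∈ A) {n : ℕ} (hn : l.sum = n) : n ∈ FoldSum h A := by
  subst hl
  subst hn
  refine ⟨l.get, fun i => hmem _ (List.get_mem l i), ?_⟩
  have h1 : (List.ofFn l.get).sum = ∑ i, l.get i := List.sum_ofFn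
  rw [List.ofFn_get] at h1
  exact h1

lemma gap_aux (m : ℕ) (F : Finset ℕ)
    (hbad : ∀ f ∈ F, m ≤ f → ∃ j, f - m ≤ j ∧ j < f ∧ j ∈ F) :
    ∀ y, y ∈ F → y < m * (F.filter (· < y)).card + m := by
  intro y
  induction y using Nat.strong_induction_on with
  | _ y ih =>
    intro hy
    by_cases hym : y < m
    · omega
    · push_neg at hym
      obtain ⟨y', hy'ge, hy'lt, hy'F⟩ := hbad y hy hym
      have h1 := ih y' hy'lt hy'F
      have h2 : (F.filter (· < y')).card + 1 ≤ (F.filter (· < y)).card := by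
        have hsub : insert y' (F.filter (· < y')) ⊆ F.filter (· < y) := by
          intro z hz
          rcases Finset.mem_insert.1 hz with rfl | hz
          · exact Finset.mem_filter.2 ⟨hy'F, hy'lt⟩
          · obtain ⟨hz1, hz2⟩ := Finset.mem_filter.1 hz
            refine Finset.mem_filter.2 ⟨hz1, ?_⟩
            have : z < y' := hz2
            show z < y
            omega
        calc (F.filter (· < y')).card + 1
            = (insert y' (F.filter (· < y'))).card :=
              (Finset.card_insert_of_notMem (by simp)).symm
          _ ≤ (F.filter (· < y)).card := Finset.card_le_card hsub
      have h3 : m * ((F.filter (· < y')).card + 1) ≤ m * (F.filter (· < y)).card :=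
        Nat.mul_le_mul_left m h2
      rw [Nat.mul_add, Nat.mul_one] at h3
      omega

lemma exists_gap {m K : ℕ} (hm : 1 ≤ m) (F : Finset ℕ)
    (hKF : K ∈ F) (hK : m * F.card + m ≤ K) :
    ∃ f ∈ F, m ≤ f ∧ ∀ j, f - m ≤ j → j < f → j ∉ F := by
  by_contra hbad
  push_neg at hbad
  have hbad' : ∀ f ∈ F, m ≤ f → ∃ j, f - m ≤ j ∧ j < f ∧ j ∈ F := by
    intro f hf hmf
    obtain ⟨j, hj1, hj2, hj3⟩ := hbad f hf hmf
    exact ⟨j, hj1, hj2, hj3⟩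
  have h1 := gap_aux m F hbad' K hKF
  have h2 : (F.filter (· < K)).card ≤ F.card - 1 := by
    have hsub : F.filter (· < K) ⊆ F.erase K := by
      intro z hz
      obtain ⟨hz1, hz2⟩ := Finset.mem_filter.1 hz
      refine Finset.mem_erase.2 ⟨?_, hz1⟩
      have : z < K := hz2
      omega
    calc (F.filter (· < K)).card ≤ (F.erase K).card := Finset.card_le_card hsub
      _ = F.card - 1 := Finset.card_erase_of_mem hKF
  have h3 : m * (F.filter (· < K)).card ≤ m * (F.card - 1) :=
    Nat.mul_le_mul_left m h2
  have h4 : 1 ≤ F.card := Finset.card_pos.2 ⟨K, hKF⟩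
  have h5 : m * (F.card - 1) + m = m * F.card := by
    obtain ⟨c, hc⟩ := Nat.exists_eq_add_of_le h4
    rw [hc, show 1 + c - 1 = c from by omega, Nat.mul_add, Nat.mul_one]
    omega
  omega

lemma ico_geom (hg : 2 ≤ g) : ∀ b a, a ≤ b →
    (∑ p ∈ Finset.Ico a b, (g - 1) * g ^ p) + g ^ a = g ^ b := by
  intro b
  induction b with
  | zero =>
      intro a ha
      have : a = 0 := by omega
      subst this; simp
  | succ b ihb =>
      intro a ha
      by_cases hab : a = b + 1
      · subst hab; simp
      · have hab' : a ≤ b := by omega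
        rw [Finset.sum_Ico_succ_top hab']
        have := ihb a hab'
        have hps : g ^ b * g = g ^ (b + 1) := by rw [pow_succ]
        have h2 : (g - 1) * g ^ b + g ^ b = g * g ^ b := by
          rw [Nat.sub_mul, one_mul]
          have : g ^ b ≤ g * g ^ b := Nat.le_mul_of_pos_left _ (by omega)
          omega
        have h3 : g * g ^ b = g ^ (b+1) := by rw [pow_succ, mul_comm]
        omega
lemma basis_main (hg : 2 ≤ g) (h : ℕ) (hh : 2 ≤ h) (W : ℕ → Set ℕ)
    (cl : ℕ → ℕ) (hcl : ∀ p, cl p < h ∧ p ∈ W (cl p)) :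
    ∀ n, g ^ (h * h) ≤ n →
      n ∈ FoldSum h (⋃ r ∈ Finset.range h, AgSet g (W r)) := by
  classical
  intro n hn
  have hgpos : (0:ℕ) < g ^ (h*h) := Nat.pow_pos (by omega)
  have hn0 : 0 < n := lt_of_lt_of_le hgpos hn
  set K := Nat.log g n with hK
  set F := (Finset.range (K+1)).filter (fun p => dig g n p ≠ 0) with hF
  have hvalF : ∑ p ∈ F, dig g n p * g ^ p = n := by
    rw [hF, Finset.sum_filter_of_ne (fun x _ hx => ?_)]
    · exact sum_dig hg (K+1) n (Nat.lt_pow_succ_log_self (by omega) n)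
    · intro hz; rw [hz, zero_mul] at hx; exact hx rfl
  have hKF : K ∈ F := by
    rw [hF, Finset.mem_filter, Finset.mem_range]
    exact ⟨by omega, dig_log_ne_zero hg hn0⟩
  have hFdig : ∀ p ∈ F, 1 ≤ dig g n p ∧ dig g n p ≤ g - 1 := by
    intro p hp
    rw [hF, Finset.mem_filter] at hp
    exact ⟨by have := hp.2; omega, dig_le hg n p⟩
  have hKbig : h * h ≤ K := Nat.le_log_of_pow_le (by omega) hn
  have himcard : ∀ s : Finset ℕ, (s.image cl).card ≤ h := by
    intro s
    calc (s.image cl).card ≤ (Finset.range h).card := by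
          apply Finset.card_le_card
          intro r hr
          obtain ⟨p, _, rfl⟩ := Finset.mem_image.1 hr
          exact Finset.mem_range.2 (hcl p).1
      _ = h := Finset.card_range h
  set S := ∑ p ∈ F, dig g n p with hS
  by_cases hSh : h ≤ S
  · -- many units: direct grouping
    obtain ⟨l, hlen, hmem, hsum⟩ := grouping hg h W cl hcl h F (dig g n)
      (fun p hp => ⟨(hFdig p hp).1, by have := (hFdig p hp).2; omega⟩)
      (fun p hp q hq h1 _ => absurd (hFdig p hp).2 (by omega))
      (by
        have hnov : ¬ ∃ p ∈ F, g - 1 < dig g n p := by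
          rintro ⟨p, hp, hgt⟩; exact absurd (hFdig p hp).2 (by omega)
        rw [if_neg hnov, add_zero]
        exact himcard F)
      hSh
    exact foldsum_of_list hlen hmem (hsum.trans hvalF)
  · -- few units: chain construction
    push_neg at hSh
    have hFcard : F.card ≤ S := by
      rw [hS]
      calc F.card = ∑ _p ∈ F, 1 := by simp
        _ ≤ ∑ p ∈ F, dig g n p := Finset.sum_le_sum (fun p hp => (hFdig p hp).1)
    have hS1 : 1 ≤ S := le_trans (Finset.card_pos.2 ⟨K, hKF⟩) hFcard
    set m := h - S with hm
    have hm1 : 1 ≤ m := by omega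
    -- gap existence
    obtain ⟨h', hh'⟩ : ∃ h', h = h' + 1 := ⟨h - 1, by omega⟩
    have hKgap : m * F.card + m ≤ K := by
      have e1 : m ≤ h' := by omega
      have e2 : F.card ≤ h' := by omega
      have e3 : m * F.card ≤ h' * h' := Nat.mul_le_mul e1 e2
      have e4 : h * h = h' * h' + 2 * h' + 1 := by rw [hh']; ring
      omega
    obtain ⟨f, hfF, hfm, hgapf⟩ := exists_gap hm1 F hKF hKgap
    set T := Finset.Ico (f - m) f with hT
    have hTcard : T.card = m := by rw [hT, Nat.card_Ico]; omega
    have hTF : ∀ p ∈ T, p ∉ F := by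
      intro p hp
      rw [hT, Finset.mem_Ico] at hp
      exact hgapf p hp.1 hp.2
    have hdisjFT : Disjoint F T := by
      rw [Finset.disjoint_right]
      intro p hp hpF
      exact hTF p hp hpF
    set c' : ℕ → ℕ := fun p =>
      if p ∈ F then (if p = f then dig g n f - 1 else dig g n p) else
        (if p ∈ T then (if p = f - m then g else g - 1) else 0) with hc'
    -- basic values of c'
    have hc'F : ∀ p ∈ F, p ≠ f → c' p = dig g n p := by
      intro p hp hpf
      simp only [hc']
      rw [if_pos hp, if_neg hpf]
    have hc'f : c' f = dig g n f - 1 := by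
      simp only [hc']
      rw [if_pos hfF]
      simp
    have hc'T : ∀ p ∈ T, p ≠ f - m → c' p = g - 1 := by
      intro p hp hpfm
      simp only [hc']
      rw [if_neg (hTF p hp), if_pos hp, if_neg hpfm]
    have hfmT : f - m ∈ T := by
      rw [hT, Finset.mem_Ico]; omega
    have hc'fm : c' (f - m) = g := by
      simp only [hc']
      rw [if_neg (hTF _ hfmT), if_pos hfmT]
      simp
    set s' := (F ∪ T).filter (fun p => c' p ≠ 0) with hs'
    -- value of the configuration
    have hsumFT : ∀ (v : ℕ → ℕ), ∑ p ∈ s', v p * c' p = ∑ p ∈ F ∪ T, v p * c' p := by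
      intro v
      rw [hs', Finset.sum_filter_of_ne]
      intro x _ hx hz
      rw [hz, mul_zero] at hx
      exact hx rfl
    have hval : ∑ p ∈ s', c' p * g ^ p = n := by
      have e0 : ∑ p ∈ s', c' p * g ^ p = ∑ p ∈ F ∪ T, c' p * g ^ p := by
        rw [hs', Finset.sum_filter_of_ne]
        intro x _ hx hz
        rw [hz, zero_mul] at hx
        exact hx rfl
      rw [e0, Finset.sum_union hdisjFT]
      -- sum over F
      have eF : ∑ p ∈ F, c' p * g ^ p = (∑ p ∈ F, dig g n p * g ^ p) - g ^ f := by
        have e1 : ∑ p ∈ F, c' p * g ^ p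
            = ∑ p ∈ F.erase f, c' p * g ^ p + c' f * g ^ f :=
          (Finset.sum_erase_add F _ hfF).symm
        have e2 : ∑ p ∈ F, dig g n p * g ^ p
            = ∑ p ∈ F.erase f, dig g n p * g ^ p + dig g n f * g ^ f :=
          (Finset.sum_erase_add F _ hfF).symm
        have e3 : ∑ p ∈ F.erase f, c' p * g ^ p = ∑ p ∈ F.erase f, dig g n p * g ^ p :=
          Finset.sum_congr rfl fun p hp =>
            by rw [hc'F p (Finset.mem_of_mem_erase hp) (Finset.ne_of_mem_erase hp)]
        have e4 : c' f * g ^ f = dig g n f * g ^ f - g ^ f := by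
          rw [hc'f, Nat.sub_mul, one_mul]
        have e5 : 1 ≤ dig g n f := (hFdig f hfF).1
        have e6 : g ^ f ≤ dig g n f * g ^ f := Nat.le_mul_of_pos_left _ (by omega)
        omega
      -- sum over T
      have eT : ∑ p ∈ T, c' p * g ^ p = g ^ f := by
        have e1 : ∑ p ∈ T, c' p * g ^ p
            = ∑ p ∈ T.erase (f - m), c' p * g ^ p + c' (f - m) * g ^ (f - m) :=
          (Finset.sum_erase_add T _ hfmT).symm
        have e2 : T.erase (f - m) = Finset.Ico (f - m + 1) f := by
          rw [hT]
          ext z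
          rw [Finset.mem_erase, Finset.mem_Ico, Finset.mem_Ico]
          omega
        have e3 : ∑ p ∈ T.erase (f - m), c' p * g ^ p
            = ∑ p ∈ Finset.Ico (f - m + 1) f, (g - 1) * g ^ p := by
          rw [e2]
          apply Finset.sum_congr rfl
          intro p hp
          rw [Finset.mem_Ico] at hp
          have hpT : p ∈ T := by rw [hT, Finset.mem_Ico]; omega
          rw [hc'T p hpT (by omega)]
        have e4 := ico_geom hg f (f - m + 1) (by omega)
        have e5 : c' (f - m) * g ^ (f - m) = g ^ (f - m + 1) := by
          rw [hc'fm, pow_succ, mul_comm]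
        omega
      have e7 : g ^ f ≤ ∑ p ∈ F, dig g n p * g ^ p := by
        calc g ^ f ≤ dig g n f * g ^ f :=
              Nat.le_mul_of_pos_left _ (by have := (hFdig f hfF).1; omega)
          _ ≤ ∑ p ∈ F, dig g n p * g ^ p :=
            Finset.single_le_sum (f := fun p => dig g n p * g ^ p)
              (fun i _ => Nat.zero_le _) hfF
      rw [eF, eT]
      omega
    -- bounds for c' on s'
    have hc1' : ∀ p ∈ s', 1 ≤ c' p ∧ c' p ≤ 2 * (g - 1) := by
      intro p hp
      rw [hs', Finset.mem_filter] at hp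
      refine ⟨by omega, ?_⟩
      rcases Finset.mem_union.1 hp.1 with hpF | hpT
      · by_cases hpf : p = f
        · subst hpf
          have := (hFdig p hpF).2
          rw [hc'f]
          omega
        · rw [hc'F p hpF hpf]
          have := (hFdig p hpF).2
          omega
      · by_cases hpfm : p = f - m
        · subst hpfm; rw [hc'fm]; omega
        · rw [hc'T p hpT hpfm]; omega
    have hover : ∀ p ∈ s', g - 1 < c' p → p = f - m := by
      intro p hp hgt
      rw [hs', Finset.mem_filter] at hp
      rcases Finset.mem_union.1 hp.1 with hpF | hpT
      · by_cases hpf : p = f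
        · subst hpf
          rw [hc'f] at hgt
          have := (hFdig p hpF).2
          omega
        · rw [hc'F p hpF hpf] at hgt
          have := (hFdig p hpF).2
          omega
      · by_cases hpfm : p = f - m
        · exact hpfm
        · rw [hc'T p hpT hpfm] at hgt; omega
    have hc2' : ∀ p ∈ s', ∀ q ∈ s', g - 1 < c' p → g - 1 < c' q → p = q := by
      intro p hp q hq h1 h2
      rw [hover p hp h1, hover q hq h2]
    -- cardinality bound
    have hcards' : s'.card + 1 ≤ h := by
      have hFS : ∀ p ∈ F.erase f, 1 ≤ dig g n p := fun p hp =>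
        (hFdig p (Finset.mem_of_mem_erase hp)).1
      by_cases haf : dig g n f = 1
      · -- f drops out of s'
        have hfs' : f ∉ s' := by
          rw [hs', Finset.mem_filter]
          rintro ⟨_, hne⟩
          rw [hc'f, haf] at hne
          exact hne rfl
        have hsub : s' ⊆ (F.erase f) ∪ T := by
          intro z hz
          have hz1 := (Finset.mem_filter.1 hz).1
          rcases Finset.mem_union.1 hz1 with hzF | hzT
          · refine Finset.mem_union_left _ (Finset.mem_erase.2 ⟨?_, hzF⟩)
            rintro rfl; exact hfs' hz
          · exact Finset.mem_union_right _ hzT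
        have h1 : s'.card ≤ (F.erase f).card + T.card :=
          le_trans (Finset.card_le_card hsub) (Finset.card_union_le _ _)
        rw [Finset.card_erase_of_mem hfF, hTcard] at h1
        have h2 : 1 ≤ F.card := Finset.card_pos.2 ⟨K, hKF⟩
        omega
      · -- dig g n f ≥ 2, so F.card ≤ S - 1
        have haf2 : 2 ≤ dig g n f := by
          have := (hFdig f hfF).1; omega
        have hFS2 : F.card + 1 ≤ S := by
          have e1 : S = ∑ p ∈ F.erase f, dig g n p + dig g n f :=
            (Finset.sum_erase_add F _ hfF).symm
          have e2 : (F.erase f).card ≤ ∑ p ∈ F.erase f, dig g n p := by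
            calc (F.erase f).card = ∑ _p ∈ F.erase f, 1 := by simp
              _ ≤ ∑ p ∈ F.erase f, dig g n p := Finset.sum_le_sum hFS
          have e3 : (F.erase f).card = F.card - 1 := Finset.card_erase_of_mem hfF
          have h2 : 1 ≤ F.card := Finset.card_pos.2 ⟨K, hKF⟩
          omega
        have hsub : s' ⊆ F ∪ T := Finset.filter_subset _ _
        have h1 : s'.card ≤ F.card + T.card :=
          le_trans (Finset.card_le_card hsub) (Finset.card_union_le _ _)
        rw [hTcard] at h1
        omega
    -- units bound
    have hunits' : h ≤ ∑ p ∈ s', c' p := by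
      have e0 : ∑ p ∈ s', c' p = ∑ p ∈ F ∪ T, c' p := by
        rw [hs', Finset.sum_filter_of_ne]
        intro x _ hx hz
        exact hx hz
      rw [e0, Finset.sum_union hdisjFT]
      have eF : ∑ p ∈ F, c' p = S - 1 := by
        have e1 : ∑ p ∈ F, c' p = ∑ p ∈ F.erase f, c' p + c' f :=
          (Finset.sum_erase_add F _ hfF).symm
        have e2 : S = ∑ p ∈ F.erase f, dig g n p + dig g n f :=
          (Finset.sum_erase_add F _ hfF).symm
        have e3 : ∑ p ∈ F.erase f, c' p = ∑ p ∈ F.erase f, dig g n p :=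
          Finset.sum_congr rfl fun p hp =>
            by rw [hc'F p (Finset.mem_of_mem_erase hp) (Finset.ne_of_mem_erase hp)]
        have e5 : 1 ≤ dig g n f := (hFdig f hfF).1
        rw [hc'f] at e1
        omega
      have eT : m + 1 ≤ ∑ p ∈ T, c' p := by
        have e1 : ∑ p ∈ T, c' p = ∑ p ∈ T.erase (f - m), c' p + c' (f - m) :=
          (Finset.sum_erase_add T _ hfmT).symm
        have e2 : (T.erase (f - m)).card ≤ ∑ p ∈ T.erase (f - m), c' p := by
          calc (T.erase (f - m)).card = ∑ _p ∈ T.erase (f - m), 1 := by simp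
            _ ≤ ∑ p ∈ T.erase (f - m), c' p := by
              apply Finset.sum_le_sum
              intro p hp
              rw [hc'T p (Finset.mem_of_mem_erase hp) (Finset.ne_of_mem_erase hp)]
              omega
        have e3 : (T.erase (f - m)).card = m - 1 := by
          rw [Finset.card_erase_of_mem hfmT, hTcard]
        rw [hc'fm] at e1
        omega
      omega
    -- apply grouping
    obtain ⟨l, hlen, hmem, hsum⟩ := grouping hg h W cl hcl h s' c' hc1' hc2'
      (by
        have hbit : (if ∃ p ∈ s', g - 1 < c' p then 1 else 0) ≤ 1 := by
          split <;> omega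
        have h1 : (s'.image cl).card ≤ s'.card := Finset.card_image_le
        omega)
      hunits'
    exact foldsum_of_list hlen hmem (hsum.trans hval)
/-- the carry *into* position `p` when adding up the `u i`. -/
def carry (g : ℕ) {h : ℕ} (u : Fin h → ℕ) (n : ℕ) (p : ℕ) : ℕ :=
  ((∑ i, u i % g ^ p) - n % g ^ p) / g ^ p

lemma mod_pow_succ_eq (hg : 2 ≤ g) (a p : ℕ) :
    a % g ^ (p+1) = a % g ^ p + dig g a p * g ^ p := by
  have hgp : 0 < g ^ p := Nat.pow_pos (by omega)
  set D := a / g ^ p with hD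
  have hsplit : a = (a % g ^ p + D % g * g ^ p) + g ^ (p+1) * (D / g) := by
    have e1 : a % g ^ p + g ^ p * D = a := Nat.mod_add_div a (g ^ p)
    have e2 : D % g + g * (D / g) = D := Nat.mod_add_div D g
    calc a = a % g ^ p + g ^ p * D := e1.symm
      _ = a % g ^ p + g ^ p * (D % g + g * (D / g)) := by rw [e2]
      _ = (a % g ^ p + D % g * g ^ p) + g ^ (p+1) * (D / g) := by
          rw [pow_succ]; ring
  have hbound : a % g ^ p + D % g * g ^ p < g ^ (p+1) := by
    have b1 : a % g ^ p < g ^ p := Nat.mod_lt _ hgp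
    have b2 : D % g ≤ g - 1 := by have := Nat.mod_lt D (show 0 < g by omega); omega
    have b3 : D % g * g ^ p ≤ (g - 1) * g ^ p := Nat.mul_le_mul_right _ b2
    have b4 : (g - 1) * g ^ p = g * g ^ p - g ^ p := by rw [Nat.sub_mul]; simp
    have b5 : g ^ (p+1) = g * g ^ p := by rw [pow_succ, mul_comm]
    have b6 : g ^ p ≤ g * g ^ p := Nat.le_mul_of_pos_left _ (by omega)
    omega
  have : dig g a p = D % g := rfl
  rw [this]
  conv_lhs => rw [hsplit]
  rw [Nat.add_mul_mod_self_left, Nat.mod_eq_of_lt hbound]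

section CarrySec

variable {h : ℕ} {u : Fin h → ℕ} {n : ℕ}

lemma carry_spec (hg : 2 ≤ g) (hsum : ∑ i, u i = n) (p : ℕ) :
    ∑ i, u i % g ^ p = n % g ^ p + carry g u n p * g ^ p := by
  have hgp : 0 < g ^ p := Nat.pow_pos (by omega)
  have hmod : (∑ i, u i % g ^ p) % g ^ p = n % g ^ p := by
    rw [← Finset.sum_nat_mod, hsum]
  have hge : n % g ^ p ≤ ∑ i, u i % g ^ p := by
    rw [← hmod]
    exact Nat.mod_le _ _
  have hdvd : g ^ p ∣ ((∑ i, u i % g ^ p) - n % g ^ p) := by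
    have hmm : (n % g ^ p) % g ^ p = n % g ^ p := Nat.mod_eq_of_lt (Nat.mod_lt _ hgp)
    have : ((∑ i, u i % g ^ p) - n % g ^ p) % g ^ p = 0 :=
      Nat.sub_mod_eq_zero_of_mod_eq (by rw [hmod, hmm])
    exact Nat.dvd_of_mod_eq_zero this
  have := Nat.div_mul_cancel hdvd
  unfold carry
  omega

lemma carry_zero : carry g u n 0 = 0 := by
  unfold carry
  simp [Nat.mod_one]

lemma carry_le (hg : 2 ≤ g) (hh : 1 ≤ h) (hsum : ∑ i, u i = n) (p : ℕ) :
    carry g u n p ≤ h - 1 := by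
  have hgp : 0 < g ^ p := Nat.pow_pos (by omega)
  have h1 : ∑ i, u i % g ^ p ≤ h * (g ^ p - 1) := by
    calc ∑ i, u i % g ^ p ≤ ∑ _i : Fin h, (g ^ p - 1) :=
          Finset.sum_le_sum fun i _ => by
            have := Nat.mod_lt (u i) hgp; omega
      _ = h * (g ^ p - 1) := by simp [Finset.sum_const, Finset.card_univ]
  have h2 := carry_spec hg hsum p
  have e : h * (g ^ p - 1) + h * 1 = h * g ^ p := by
    rw [← Nat.mul_add]; congr 1; omega
  have hlt : carry g u n p < h := by
    unfold carry
    rw [Nat.div_lt_iff_lt_mul hgp]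
    have h6 : h ≤ h * g ^ p := Nat.le_mul_of_pos_right _ hgp
    have h7 : h * g ^ p = g ^ p * h := by ring
    generalize n % g ^ p = R
    omega
  omega

lemma carry_rec (hg : 2 ≤ g) (hsum : ∑ i, u i = n) (p : ℕ) :
    (∑ i, dig g (u i) p) + carry g u n p
      = dig g n p + g * carry g u n (p+1) := by
  have hgp : 0 < g ^ p := Nat.pow_pos (by omega)
  have e1 : ∑ i, u i % g ^ (p+1)
      = (∑ i, u i % g ^ p) + (∑ i, dig g (u i) p) * g ^ p := by
    rw [Finset.sum_mul, ← Finset.sum_add_distrib]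
    exact Finset.sum_congr rfl fun i _ => mod_pow_succ_eq hg (u i) p
  have e2 := carry_spec hg hsum (p+1)
  have e3 := carry_spec hg hsum p
  have e4 := mod_pow_succ_eq hg n p
  have key : ((∑ i, dig g (u i) p) + carry g u n p) * g ^ p
      = (dig g n p + g * carry g u n (p+1)) * g ^ p := by
    have e5 : carry g u n (p+1) * g ^ (p+1) = g * carry g u n (p+1) * g ^ p := by
      rw [pow_succ]; ring
    have lhs1 : ((∑ i, dig g (u i) p) + carry g u n p) * g ^ p
        = (∑ i, dig g (u i) p) * g ^ p + carry g u n p * g ^ p := by ring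
    have rhs1 : (dig g n p + g * carry g u n (p+1)) * g ^ p
        = dig g n p * g ^ p + g * carry g u n (p+1) * g ^ p := by ring
    omega
  exact Nat.eq_of_mul_eq_mul_right hgp key

end CarrySec
lemma minimality_main (hg : 2 ≤ g) {h t : ℕ} (hh : 2 ≤ h) (ht : 2 ≤ t)
    (hth : h < g ^ t) (W : ℕ → Set ℕ) (cl : ℕ → ℕ)
    (hcl : ∀ p, cl p < h ∧ p ∈ W (cl p))
    (hdisj : ∀ r < h, ∀ s < h, r ≠ s → Disjoint (W r) (W s))
    (hinf : ∀ r < h, (W r).Infinite)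
    (x : ℕ → ℕ) (hx : ∀ r < h, ∀ j < t, x r + j ∈ W r)
    (ρ : ℕ) (hρ : ρ < h) (astar : ℕ) (hastar : astar ∈ AgSet g (W ρ)) (N : ℕ) :
    ∃ n, N ≤ n ∧ ∀ u : Fin h → ℕ,
      (∀ i, u i ∈ ⋃ r ∈ Finset.range h, AgSet g (W r)) → (∑ i, u i = n) →
      ∃ i, u i = astar := by
  classical
  -- basic facts about astar
  obtain ⟨ha0, hsupp⟩ := (mem_AgSet_iff hg).1 hastar
  set fs := Nat.log g astar with hfs
  have hfρ : fs ∈ W ρ := hsupp fs (dig_log_ne_zero hg ha0)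
  have hdigfs : 1 ≤ dig g astar fs := by
    have h0 := dig_log_ne_zero hg ha0
    rw [← hfs] at h0
    omega
  -- class uniqueness
  have hclu : ∀ p r, r < h → p ∈ W r → cl p = r := by
    intro p r hr hpr
    by_contra hne
    have hd := hdisj (cl p) (hcl p).1 r hr hne
    exact (Set.disjoint_left.1 hd) (hcl p).2 hpr
  have hWdisj : ∀ p r r', r < h → r' < h → p ∈ W r → p ∈ W r' → r = r' := by
    intro p r r' hr hr' h1 h2
    rw [← hclu p r hr h1, ← hclu p r' hr' h2]
  -- choose the auxiliary class r₁ and the high position w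
  set r₁ := if ρ = 0 then 1 else 0 with hr₁
  have hr₁h : r₁ < h := by rw [hr₁]; split <;> omega
  have hr₁ρ : r₁ ≠ ρ := by rw [hr₁]; split <;> omega
  set M := N + fs + t + (∑ r ∈ Finset.range h, x r) + 1 with hM
  have hMx : ∀ r, r < h → x r + t ≤ M := by
    intro r hr
    have : x r ≤ ∑ r ∈ Finset.range h, x r :=
      Finset.single_le_sum (f := x) (fun i _ => Nat.zero_le _)
        (Finset.mem_range.2 hr)
    omega
  obtain ⟨w, hwW, hwM⟩ := (hinf r₁ hr₁h).exists_gt M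
  have hwρ : w ∉ W ρ := by
    intro hmem
    exact hr₁ρ (hWdisj w r₁ ρ hr₁h hρ hwW hmem)
  have hwfs : fs < w := by omega
  -- the design
  set cstar : ℕ → ℕ := fun p =>
    if p = w then 1 else
    if p ∈ W ρ then dig g astar p else
    if (p < fs ∨ ∃ r, r < h ∧ r ≠ ρ ∧ x r ≤ p ∧ p < x r + t) then g - 1 else 0
    with hcstar
  have hcsle : ∀ p, cstar p ≤ g - 1 := by
    intro p
    simp only [hcstar]
    split_ifs with h1 h2 h3
    · omega
    · exact dig_le hg astar p
    · omega
    · omega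
  have hcs_zero : ∀ p, w + 1 ≤ p → cstar p = 0 := by
    intro p hp
    simp only [hcstar]
    rw [if_neg (by omega)]
    split_ifs with h2 h3
    · exact dig_zero_of_log_lt hg (by omega)
    · exfalso
      rcases h3 with h3 | ⟨r, hr, _, _, h4⟩
      · omega
      · have := hMx r hr; omega
    · rfl
  set n := ∑ p ∈ Finset.range (w+1), cstar p * g ^ p with hn
  have hdign : ∀ p, dig g n p = cstar p := by
    intro p
    rw [hn, dig_val hg _ _ (fun q _ => hcsle q) p]
    split_ifs with h1
    · rfl
    · rw [Finset.mem_range] at h1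
      exact (hcs_zero p (by omega)).symm
  have hcw : cstar w = 1 := by simp [hcstar]
  have hnN : N ≤ n := by
    have h1 : cstar w * g ^ w ≤ n := by
      rw [hn]
      exact Finset.single_le_sum (f := fun p => cstar p * g ^ p)
        (fun i _ => Nat.zero_le _) (Finset.mem_range.2 (by omega))
    have h2 : w < g ^ w := Nat.lt_pow_self (by omega)
    rw [hcw, one_mul] at h1
    omega
  refine ⟨n, hnN, ?_⟩
  intro u hu hsum
  by_contra hne
  push_neg at hne
  -- classes of the summands
  have hclass : ∀ i, ∃ r, r < h ∧ u i ∈ AgSet g (W r) := by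
    intro i
    have := hu i
    rw [Set.mem_iUnion] at this
    obtain ⟨r, hr⟩ := this
    rw [Set.mem_iUnion] at hr
    obtain ⟨hrh, hmem⟩ := hr
    exact ⟨r, Finset.mem_range.1 hrh, hmem⟩
  choose cu hcu1 hcu2 using hclass
  have hupos : ∀ i, 0 < u i := fun i => ((mem_AgSet_iff hg).1 (hcu2 i)).1
  have hdig_u : ∀ i p, dig g (u i) p ≠ 0 → p ∈ W (cu i) := fun i =>
    ((mem_AgSet_iff hg).1 (hcu2 i)).2
  set k : ℕ → ℕ := fun r => (Finset.univ.filter (fun i : Fin h => cu i = r)).card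
    with hk
  -- digit sums are controlled by the class of the position
  have hzero_sum : ∀ p r, r < h → p ∈ W r → k r = 0 → ∑ i, dig g (u i) p = 0 := by
    intro p r hr hpr hkr
    apply Finset.sum_eq_zero
    intro i _
    by_contra hdne
    have h1 : p ∈ W (cu i) := hdig_u i p hdne
    have h2 : cu i = r := hWdisj p (cu i) r (hcu1 i) hr h1 hpr
    have : i ∈ Finset.univ.filter (fun i : Fin h => cu i = r) := by
      rw [Finset.mem_filter]; exact ⟨Finset.mem_univ i, h2⟩
    rw [hk] at hkr
    rw [Finset.card_eq_zero.1 hkr] at this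
    exact absurd this (Finset.notMem_empty i)
  have hdsum : ∀ p r, r < h → p ∈ W r → ∑ i, dig g (u i) p ≤ k r * (g - 1) := by
    intro p r hr hpr
    have e1 : ∑ i, dig g (u i) p
        = ∑ i ∈ Finset.univ.filter (fun i : Fin h => cu i = r), dig g (u i) p := by
      symm
      apply Finset.sum_filter_of_ne
      intro i _ hdne
      exact hWdisj p (cu i) r (hcu1 i) hr (hdig_u i p hdne) hpr
    rw [e1]
    calc ∑ i ∈ Finset.univ.filter (fun i : Fin h => cu i = r), dig g (u i) p
        ≤ ∑ _i ∈ Finset.univ.filter (fun i : Fin h => cu i = r), (g - 1) :=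
          Finset.sum_le_sum fun i _ => dig_le hg (u i) p
      _ = k r * (g - 1) := by rw [Finset.sum_const, smul_eq_mul, hk]
  -- pinning: every class other than ρ hosts a summand
  have hpin : ∀ r, r < h → r ≠ ρ → 1 ≤ k r := by
    intro r hr hrρ
    by_contra hk0
    push_neg at hk0
    have hkr0 : k r = 0 := by omega
    have hblock : ∀ j, j ≤ t → g ^ j - 1 ≤ carry g u n (x r + t - j) := by
      intro j
      induction j with
      | zero => intro _; simp
      | succ j ihj =>
          intro hjt
          have hIH := ihj (by omega)
          set p := x r + t - (j + 1) with hp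
          have hpW : p ∈ W r := by
            have : p = x r + (t - 1 - j) := by omega
            rw [this]
            exact hx r hr _ (by omega)
          have hrec := carry_rec hg hsum p
          have hz := hzero_sum p r hr hpW hkr0
          have hdn : dig g n p = g - 1 := by
            rw [hdign]
            simp only [hcstar]
            have hpw : p ≠ w := by
              have := hMx r hr; omega
            rw [if_neg hpw]
            have hpρ : p ∉ W ρ := by
              intro hmem
              exact hrρ (hWdisj p r ρ hr hρ hpW hmem)
            rw [if_neg hpρ, if_pos]
            right
            exact ⟨r, hr, hrρ, by omega, by omega⟩
          have hsucc : p + 1 = x r + t - j := by omega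
          rw [hsucc] at hrec
          have hmul : g * (g ^ j - 1) ≤ g * carry g u n (x r + t - j) :=
            Nat.mul_le_mul_left g hIH
          have hgj : 1 ≤ g ^ j := Nat.one_le_pow _ _ (by omega)
          have hgsub : g * (g ^ j - 1) = g ^ (j+1) - g := by
            rw [Nat.mul_sub, Nat.mul_one, pow_succ, mul_comm]
          have : g ^ (j + 1) = g * g ^ j := by rw [pow_succ, mul_comm]
          omega
    have hfin := hblock t (le_refl t)
    have hcle := carry_le hg (by omega) hsum (x r + t - t)
    have hgt : h ≤ g ^ t - 1 := by omega
    omega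
  -- total number of summands by class
  have hksum : ∑ r ∈ Finset.range h, k r = h := by
    have := Finset.card_eq_sum_card_fiberwise
      (f := cu) (s := Finset.univ) (t := Finset.range h)
      (fun i _ => Finset.mem_range.2 (hcu1 i))
    rw [Finset.card_univ, Fintype.card_fin] at this
    rw [hk]
    exact this.symm
  -- class ρ hosts a summand as well
  have hkρ : 1 ≤ k ρ := by
    by_contra hk0
    push_neg at hk0
    have hkρ0 : k ρ = 0 := by omega
    -- every class has at most two summands
    have hk2 : ∀ r, r < h → k r ≤ 2 := by
      intro r hr
      by_cases hrρ' : r = ρ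
      · subst hrρ'; omega
      · have h1 : ρ ∈ Finset.range h := Finset.mem_range.2 hρ
        have h2 : r ∈ (Finset.range h).erase ρ :=
          Finset.mem_erase.2 ⟨hrρ', Finset.mem_range.2 hr⟩
        have e1 : ∑ r' ∈ (Finset.range h).erase ρ, k r' + k ρ
            = ∑ r' ∈ Finset.range h, k r' := Finset.sum_erase_add _ _ h1
        have e2 : ∑ r' ∈ ((Finset.range h).erase ρ).erase r, k r' + k r
            = ∑ r' ∈ (Finset.range h).erase ρ, k r' := Finset.sum_erase_add _ _ h2
        have e3 : (h - 2 : ℕ) ≤ ∑ r' ∈ ((Finset.range h).erase ρ).erase r, k r' := by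
          have hcard : (((Finset.range h).erase ρ).erase r).card = h - 2 := by
            rw [Finset.card_erase_of_mem h2, Finset.card_erase_of_mem h1,
              Finset.card_range]
            omega
          calc (h - 2 : ℕ) = (((Finset.range h).erase ρ).erase r).card := hcard.symm
            _ = ∑ _r' ∈ ((Finset.range h).erase ρ).erase r, 1 := by simp
            _ ≤ ∑ r' ∈ ((Finset.range h).erase ρ).erase r, k r' := by
                apply Finset.sum_le_sum
                intro r' hr'
                have h3 := Finset.mem_erase.1 hr'
                have h4 := Finset.mem_erase.1 h3.2
                exact hpin r' (Finset.mem_range.1 h4.2) h4.1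
        omega
    -- carries stay at most 1
    have hcarry1 : ∀ p, carry g u n p ≤ 1 := by
      intro p
      induction p with
      | zero => simp [carry_zero]
      | succ p ihp =>
          have hrec := carry_rec hg hsum p
          have hdp : ∑ i, dig g (u i) p ≤ 2 * (g - 1) := by
            have h1 := hdsum p (cl p) (hcl p).1 (hcl p).2
            have h2 := hk2 (cl p) (hcl p).1
            have h3 : k (cl p) * (g - 1) ≤ 2 * (g - 1) :=
              Nat.mul_le_mul_right _ h2
            omega
          by_contra hc
          push_neg at hc
          have h4 : 2 ≤ carry g u n (p+1) := hc
          have h5 : g * 2 ≤ g * carry g u n (p+1) := Nat.mul_le_mul_left g h4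
          omega
    -- a carry must feed the top digit of astar
    have hKfs : 1 ≤ carry g u n fs := by
      have hrec := carry_rec hg hsum fs
      have hz := hzero_sum fs ρ hρ hfρ hkρ0
      have hdn : dig g n fs = dig g astar fs := by
        rw [hdign]
        simp only [hcstar]
        rw [if_neg (by omega : ¬ fs = w), if_pos hfρ]
      omega
    -- carry descends all the way to position 0
    have hdesc : ∀ j, j ≤ fs → 1 ≤ carry g u n (fs - j) := by
      intro j
      induction j with
      | zero => intro _; simpa using hKfs
      | succ j ihj =>
          intro hjfs
          have hIH := ihj (by omega)
          set p := fs - j with hp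
          have hp1 : 1 ≤ p := by omega
          have hrec := carry_rec hg hsum (p - 1)
          have hplt : p - 1 < fs := by omega
          have hsucc : p - 1 + 1 = p := by omega
          rw [hsucc] at hrec
          by_cases hpρ : (p - 1) ∈ W ρ
          · exfalso
            have hz := hzero_sum (p - 1) ρ hρ hpρ hkρ0
            have hc1 := hcarry1 (p - 1)
            have hgc : g * 1 ≤ g * carry g u n p := Nat.mul_le_mul_left g hIH
            omega
          · have hdn : dig g n (p - 1) = g - 1 := by
              rw [hdign]
              simp only [hcstar]
              rw [if_neg (by omega : ¬ p - 1 = w), if_neg hpρ, if_pos (Or.inl hplt)]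
            have hdp : ∑ i, dig g (u i) (p - 1) ≤ 2 * (g - 1) := by
              have h1 := hdsum (p - 1) (cl (p - 1)) (hcl (p - 1)).1 (hcl (p - 1)).2
              have h2 := hk2 (cl (p - 1)) (hcl (p - 1)).1
              have h3 : k (cl (p - 1)) * (g - 1) ≤ 2 * (g - 1) :=
                Nat.mul_le_mul_right _ h2
              omega
            have hgc : g * 1 ≤ g * carry g u n p := Nat.mul_le_mul_left g hIH
            have : fs - (j + 1) = p - 1 := by omega
            rw [this]
            omega
    have hfin := hdesc fs (le_refl fs)
    have : fs - fs = 0 := by omega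
    rw [this, carry_zero] at hfin
    omega
  -- now every class hosts exactly one summand
  have hk1 : ∀ r, r < h → k r = 1 := by
    intro r hr
    by_contra hk2'
    have hge : 1 ≤ k r := by
      by_cases hrρ' : r = ρ
      · subst hrρ'; exact hkρ
      · exact hpin r hr hrρ'
    have h2 : 2 ≤ k r := by omega
    have h1 : r ∈ Finset.range h := Finset.mem_range.2 hr
    have e1 : ∑ r' ∈ (Finset.range h).erase r, k r' + k r
        = ∑ r' ∈ Finset.range h, k r' := Finset.sum_erase_add _ _ h1
    have e3 : (h - 1 : ℕ) ≤ ∑ r' ∈ (Finset.range h).erase r, k r' := by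
      have hcard : ((Finset.range h).erase r).card = h - 1 := by
        rw [Finset.card_erase_of_mem h1, Finset.card_range]
      calc (h - 1 : ℕ) = ((Finset.range h).erase r).card := hcard.symm
        _ = ∑ _r' ∈ (Finset.range h).erase r, 1 := by simp
        _ ≤ ∑ r' ∈ (Finset.range h).erase r, k r' := by
            apply Finset.sum_le_sum
            intro r' hr'
            have h3 := Finset.mem_erase.1 hr'
            by_cases hrρ' : r' = ρ
            · subst hrρ'; exact hkρ
            · exact hpin r' (Finset.mem_range.1 h3.2) hrρ'
    omega
  -- hence there are no carries at all
  have hnoc : ∀ p, carry g u n p = 0 := by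
    intro p
    induction p with
    | zero => exact carry_zero
    | succ p ihp =>
        have hrec := carry_rec hg hsum p
        have hdp : ∑ i, dig g (u i) p ≤ g - 1 := by
          have h1 := hdsum p (cl p) (hcl p).1 (hcl p).2
          have h2 := hk1 (cl p) (hcl p).1
          rw [h2, one_mul] at h1
          exact h1
        by_contra hc
        have h4 : 1 ≤ carry g u n (p+1) := by omega
        have h5 : g * 1 ≤ g * carry g u n (p+1) := Nat.mul_le_mul_left g h4
        omega
  have hmatch : ∀ p, ∑ i, dig g (u i) p = dig g n p := by
    intro p
    have hrec := carry_rec hg hsum p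
    rw [hnoc p, hnoc (p+1)] at hrec
    omega
  -- the unique summand of class ρ equals astar
  have hkρ1 : (Finset.univ.filter (fun i : Fin h => cu i = ρ)).card = 1 := hk1 ρ hρ
  obtain ⟨i₀, hi₀⟩ := Finset.card_eq_one.1 hkρ1
  have hi₀ρ : cu i₀ = ρ := by
    have : i₀ ∈ Finset.univ.filter (fun i : Fin h => cu i = ρ) := by
      rw [hi₀]; exact Finset.mem_singleton_self i₀
    exact (Finset.mem_filter.1 this).2
  have hfinal : ∀ p, dig g (u i₀) p = dig g astar p := by
    intro p
    by_cases hpρ : p ∈ W ρ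
    · have e1 : ∑ i, dig g (u i) p = dig g (u i₀) p := by
        have e2 : ∑ i, dig g (u i) p
            = ∑ i ∈ Finset.univ.filter (fun i : Fin h => cu i = ρ), dig g (u i) p := by
          symm
          apply Finset.sum_filter_of_ne
          intro i _ hdne
          exact hWdisj p (cu i) ρ (hcu1 i) hρ (hdig_u i p hdne) hpρ
        rw [e2, hi₀, Finset.sum_singleton]
      have e3 : dig g n p = dig g astar p := by
        rw [hdign]
        simp only [hcstar]
        have hpw : p ≠ w := by rintro rfl; exact hwρ hpρ
        rw [if_neg hpw, if_pos hpρ]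
      rw [← e1, hmatch p, e3]
    · have e1 : dig g (u i₀) p = 0 := by
        by_contra hdne
        rw [← hi₀ρ] at hpρ
        exact hpρ (hdig_u i₀ p hdne)
      have e2 : dig g astar p = 0 := by
        by_contra hdne
        exact hpρ (hsupp p hdne)
      rw [e1, e2]
  exact hne i₀ (eq_of_dig_eq hg hfinal)
end Stmt5Aux

open Stmt5Aux in
/-- Theorem D: Let `g ≥ 2`, `h ≥ 2` and `t ≥ 2` with `g ^ t > h`. If ℕ is
partitioned into pairwise disjoint sets `W 0, …, W (h-1)`, each infinite and containing an
interval of `t` consecutive integers, then `A = A_g(W 0) ∪ ⋯ ∪ A_g(W (h-1))` is a minimal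
asymptotic basis of order `h`. -/
theorem stmt5 (g h t : ℕ) (hg : 2 ≤ g) (hh : 2 ≤ h) (ht : 2 ≤ t) (hth : h < g ^ t)
    (W : ℕ → Set ℕ)
    (hcover : (⋃ r ∈ Finset.range h, W r) = Set.univ)
    (hdisj : ∀ r < h, ∀ s < h, r ≠ s → Disjoint (W r) (W s))
    (hinf : ∀ r < h, (W r).Infinite)
    (hcons : ∀ r < h, ∃ x : ℕ, ∀ j < t, x + j ∈ W r) :
    IsMinimalAsymptoticBasis h (⋃ r ∈ Finset.range h, AgSet g (W r)) := by
  classical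
  have hclex : ∀ p : ℕ, ∃ r, r < h ∧ p ∈ W r := by
    intro p
    have hp : p ∈ (⋃ r ∈ Finset.range h, W r) := by
      rw [hcover]; trivial
    rw [Set.mem_iUnion] at hp
    obtain ⟨r, hr⟩ := hp
    rw [Set.mem_iUnion] at hr
    obtain ⟨hrh, hmem⟩ := hr
    exact ⟨r, Finset.mem_range.1 hrh, hmem⟩
  choose cl hcl1 hcl2 using hclex
  have hcl : ∀ p, cl p < h ∧ p ∈ W (cl p) := fun p => ⟨hcl1 p, hcl2 p⟩
  constructor
  · -- asymptotic basis
    rw [IsAsymptoticBasis, Filter.eventually_atTop]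
    exact ⟨g ^ (h * h), basis_main hg h hh W cl hcl⟩
  · -- minimality
    intro B hB hbasisB
    obtain ⟨astar, hastarA, hastarB⟩ := Set.exists_of_ssubset hB
    have hastarU := hastarA
    rw [Set.mem_iUnion] at hastarU
    obtain ⟨ρ, hρ'⟩ := hastarU
    rw [Set.mem_iUnion] at hρ'
    obtain ⟨hρh, hastarρ⟩ := hρ'
    have hρ : ρ < h := Finset.mem_range.1 hρh
    choose! x hx using hcons
    rw [IsAsymptoticBasis, Filter.eventually_atTop] at hbasisB
    obtain ⟨N, hN⟩ := hbasisB
    obtain ⟨n, hnN, hforce⟩ := minimality_main hg hh ht hth W cl hcl hdisj hinf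
      x hx ρ hρ astar hastarρ N
    obtain ⟨v, hv, hvsum⟩ := hN n hnN
    obtain ⟨i, hi⟩ := hforce v (fun i => hB.subset (hv i)) hvsum.symm
    exact hastarB (hi ▸ hv i)
end

section
/- Let g ≥ 2 and h be integers with 2 ≤ h < g^2. Let ℕ = W_0 ∪ W_1 ∪ ⋯ ∪ W_{h-1} be a partition into pairwise disjoint infinite sets such that for every r and every w ∈ W_r, either w−1 ∈ W_r or w+1 ∈ W_r. Then A = A_g(W_0) ∪ A_g(W_1) ∪ ⋯ ∪ A_g(W_{h-1}) is a minimal asymptotic basis of order h. -/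
/-! ### Auxiliary digit lemmas -/

private lemma sum_lt_pow {g : ℕ} (hg : 2 ≤ g) (b : ℕ → ℕ) (hb : ∀ j, b j < g) :
    ∀ T, ∑ j ∈ Finset.range T, b j * g ^ j < g ^ T := by
  intro T
  induction T with
  | zero => simp
  | succ T ih =>
    rw [Finset.sum_range_succ, pow_succ]
    have h1 := hb T
    have h2 : (0:ℕ) < g ^ T := Nat.pow_pos (by omega)
    nlinarith

private lemma digit_sum {g : ℕ} (hg : 2 ≤ g) :
    ∀ (T : ℕ) (b : ℕ → ℕ), (∀ j, b j < g) → ∀ i,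
      (∑ j ∈ Finset.range T, b j * g ^ j) / g ^ i % g = if i < T then b i else 0 := by
  intro T
  induction T with
  | zero => intro b hb i; simp
  | succ T ih =>
    intro b hb i
    have hg0 : 0 < g := by omega
    have hsplit : ∑ j ∈ Finset.range (T+1), b j * g ^ j
        = b 0 + g * ∑ j ∈ Finset.range T, b (j+1) * g ^ j := by
      rw [Finset.sum_range_succ', Finset.mul_sum]
      rw [add_comm]
      congr 1
      · simp
      · apply Finset.sum_congr rfl
        intro j _
        ring
    rw [hsplit]
    cases i with
    | zero =>
      simp only [pow_zero, Nat.div_one, if_pos (Nat.succ_pos T)]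
      rw [Nat.add_mul_mod_self_left]
      exact Nat.mod_eq_of_lt (hb 0)
    | succ i =>
      have hdiv : (b 0 + g * ∑ j ∈ Finset.range T, b (j+1) * g ^ j) / g ^ (i+1)
          = (∑ j ∈ Finset.range T, b (j+1) * g ^ j) / g ^ i := by
        rw [pow_succ', ← Nat.div_div_eq_div_mul]
        congr 1
        rw [Nat.add_mul_div_left _ _ hg0, Nat.div_eq_of_lt (hb 0), zero_add]
      rw [hdiv, ih (fun j => b (j+1)) (fun j => hb (j+1)) i]
      simp [Nat.succ_lt_succ_iff]

private lemma self_digit_sum {g : ℕ} (hg : 2 ≤ g) :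
    ∀ (T : ℕ) (n : ℕ), n < g ^ T → n = ∑ j ∈ Finset.range T, (n / g ^ j % g) * g ^ j := by
  intro T
  induction T with
  | zero => intro n hn; simpa using Nat.lt_one_iff.mp (by simpa using hn)
  | succ T ih =>
    intro n hn
    have hg0 : 0 < g := by omega
    have hq : n / g < g ^ T := by
      rw [Nat.div_lt_iff_lt_mul hg0]
      rw [pow_succ] at hn
      exact hn
    rw [Finset.sum_range_succ']
    have hdd : ∀ j, n / g ^ (j+1) = (n / g) / g ^ j := by
      intro j
      rw [pow_succ', Nat.div_div_eq_div_mul]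
    have hdm : g * (n / g) + n % g = n := Nat.div_add_mod n g
    calc n = g * (n / g) + n % g := hdm.symm
    _ = ∑ j ∈ Finset.range T, n / g ^ (j+1) % g * g ^ (j+1) + n / g ^ 0 % g * g ^ 0 := by
        congr 1
        · rw [ih (n / g) hq, Finset.mul_sum]
          apply Finset.sum_congr rfl
          intro j _
          rw [hdd j]
          ring
        · simp

open Classical in
private lemma expand_to_range {g : ℕ} (F : Finset ℕ) (a : ℕ → ℕ) (T : ℕ)
    (hT : ∀ f ∈ F, f < T) :
    ∑ f ∈ F, a f * g ^ f = ∑ j ∈ Finset.range T, (if j ∈ F then a j else 0) * g ^ j := by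
  have hrw : ∀ j, (if j ∈ F then a j else 0) * g ^ j = if j ∈ F then a j * g ^ j else 0 := by
    intro j; split <;> simp
  rw [Finset.sum_congr rfl (fun j _ => hrw j), Finset.sum_ite_mem]
  congr 1
  symm
  rw [Finset.inter_eq_right]
  intro x hx
  exact Finset.mem_range.mpr (hT x hx)

private lemma AgSet_digits {g : ℕ} (hg : 2 ≤ g) {W : Set ℕ} {y : ℕ} (hy : y ∈ AgSet g W) :
    (∀ j, j ∉ W → y / g ^ j % g = 0) ∧ 1 ≤ y := by
  classical
  obtain ⟨F, hFne, hFW, a, ha, rfl⟩ := hy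
  set T := F.sup id + 1 with hTdef
  have hT : ∀ f ∈ F, f < T := by
    intro f hf
    have : f ≤ F.sup id := Finset.le_sup (f := id) hf
    omega
  have hb : ∀ j, (if j ∈ F then a j else 0) < g := by
    intro j
    split
    · have := ha j ‹j ∈ F›; omega
    · omega
  have hexp := expand_to_range (g := g) F a T hT
  constructor
  · intro j hjW
    rw [hexp, digit_sum hg T _ hb j]
    have hjF : j ∉ F := fun hj => hjW (hFW hj)
    simp [hjF]
  · obtain ⟨f, hf⟩ := hFne
    have h1 : 1 ≤ a f * g ^ f := by
      have ha1 := (ha f hf).1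
      have hp : 0 < g ^ f := Nat.pow_pos (by omega)
      exact Nat.one_le_iff_ne_zero.mpr (by positivity)
    calc 1 ≤ a f * g ^ f := h1
      _ ≤ ∑ f ∈ F, a f * g ^ f :=
        Finset.single_le_sum (f := fun f => a f * g ^ f) (fun i _ => Nat.zero_le _) hf

/-! ### Carry machinery -/

section carry
variable {g h : ℕ} (y : Fin h → ℕ)

private def carry (g : ℕ) (y : Fin h → ℕ) (j : ℕ) : ℕ := (∑ i, y i % g ^ j) / g ^ j

private lemma carry_zero : carry g y 0 = 0 := by simp [carry, Nat.mod_one]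

private lemma carry_eq (hg : 2 ≤ g) (j : ℕ) :
    ∑ i, y i % g ^ j = (∑ i, y i) % g ^ j + carry g y j * g ^ j := by
  have hmod : (∑ i, y i % g ^ j) % g ^ j = (∑ i, y i) % g ^ j := by
    conv_rhs => rw [Finset.sum_nat_mod]
  have hdm := Nat.div_add_mod (∑ i, y i % g ^ j) (g ^ j)
  rw [hmod] at hdm
  unfold carry
  rw [mul_comm]
  omega

private lemma carry_lt (hg : 2 ≤ g) (hh : 1 ≤ h) (j : ℕ) : carry g y j < h := by
  have hgj : 0 < g ^ j := Nat.pow_pos (by omega)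
  have hb : ∑ i, y i % g ^ j ≤ h * (g ^ j - 1) := by
    calc ∑ i, y i % g ^ j ≤ ∑ _i : Fin h, (g ^ j - 1) := by
          apply Finset.sum_le_sum
          intro i _
          have := Nat.mod_lt (y i) hgj
          omega
      _ = h * (g ^ j - 1) := by simp [Finset.sum_const, Finset.card_univ, mul_comm]
  unfold carry
  rw [Nat.div_lt_iff_lt_mul hgj]
  have hlt : h * (g ^ j - 1) < h * g ^ j := by
    apply Nat.mul_lt_mul_of_le_of_lt (le_refl h) <;> omega
  calc ∑ i, y i % g ^ j ≤ h * (g ^ j - 1) := hb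
    _ < h * g ^ j := hlt

private lemma carry_column (hg : 2 ≤ g) (j : ℕ) :
    (∑ i, y i) / g ^ j % g + g * carry g y (j + 1)
      = carry g y j + ∑ i, y i / g ^ j % g := by
  have hgj : 0 < g ^ j := Nat.pow_pos (by omega)
  have hstep : ∀ m : ℕ, m % g ^ (j+1) = m % g ^ j + g ^ j * (m / g ^ j % g) := by
    intro m
    rw [pow_succ]
    exact Nat.mod_mul
  have e1 : ∑ i, y i % g ^ (j+1) = ∑ i, y i % g ^ j + g ^ j * ∑ i, y i / g ^ j % g := by
    rw [Finset.mul_sum, ← Finset.sum_add_distrib]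
    apply Finset.sum_congr rfl
    intro i _
    exact hstep (y i)
  rw [carry_eq y hg (j+1), carry_eq y hg j, hstep (∑ i, y i)] at e1
  have hp : g ^ (j+1) = g ^ j * g := pow_succ g j
  rw [hp] at e1
  apply Nat.eq_of_mul_eq_mul_left hgj
  ring_nf
  ring_nf at e1
  omega

end carry

/-! ### The core minimality lemma -/

private lemma core {g h : ℕ} (hg : 2 ≤ g) (hh : 2 ≤ h) (hhg : h < g ^ 2)
    (W : ℕ → Set ℕ)
    (hcover : (⋃ r ∈ Finset.range h, W r) = Set.univ)
    (hdisj : ∀ r < h, ∀ s < h, r ≠ s → Disjoint (W r) (W s))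
    {r₀ : ℕ} (hr₀ : r₀ < h)
    (Fs : Finset ℕ) (hFne : Fs.Nonempty) (hFW : ↑Fs ⊆ W r₀)
    (a : ℕ → ℕ) (ha : ∀ f ∈ Fs, 1 ≤ a f ∧ a f ≤ g - 1)
    (t : ℕ) (hFt : ∀ f ∈ Fs, f < t)
    (hpair : ∀ s < h, s ≠ r₀ → ∃ p, p ∈ W s ∧ p + 1 ∈ W s ∧ p + 1 < t)
    (N : ℕ) (hNlt : N < g ^ t)
    (hd1 : ∀ f ∈ Fs, N / g ^ f % g = a f)
    (hd2 : ∀ j, j ∈ W r₀ → j ∉ Fs → N / g ^ j % g = 0)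
    (hd3 : ∀ j < t, j ∉ W r₀ → N / g ^ j % g = g - 1)
    (y : Fin h → ℕ) (hy : ∀ i, y i ∈ ⋃ r ∈ Finset.range h, AgSet g (W r))
    (hsum : ∑ i, y i = N) :
    ∃ i, y i = ∑ f ∈ Fs, a f * g ^ f := by
  classical
  have hg2 : g ^ 2 = g * g := sq g
  -- the class of each natural number
  have hclse : ∀ j : ℕ, ∃ r, r < h ∧ j ∈ W r := by
    intro j
    have hj : j ∈ (⋃ r ∈ Finset.range h, W r) := by rw [hcover]; trivial
    simpa [Finset.mem_range] using hj
  choose cls hclslt hclsmem using hclse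
  have hcls_unique : ∀ j r, r < h → j ∈ W r → cls j = r := by
    intro j r hr hj
    by_contra hne
    exact (Set.disjoint_left.mp (hdisj (cls j) (hclslt j) r hr hne) (hclsmem j)) hj
  -- the class of each summand
  have hymem : ∀ i, ∃ r, r < h ∧ y i ∈ AgSet g (W r) := by
    intro i
    have := hy i
    simpa [Finset.mem_range] using this
  choose cl hcllt hclA using hymem
  set D : Fin h → ℕ → ℕ := fun i j => y i / g ^ j % g with hDdef
  have hD0 : ∀ i j, j ∉ W (cl i) → D i j = 0 := fun i j hj => (AgSet_digits hg (hclA i)).1 j hj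
  have hDlt : ∀ i j, D i j < g := fun i j => Nat.mod_lt _ (by omega)
  set c : ℕ → ℕ := fun j => carry g y j with hcdef
  have hcol : ∀ j, N / g ^ j % g + g * c (j+1) = c j + ∑ i, D i j := by
    intro j
    rw [← hsum]
    exact carry_column y hg j
  have hclt : ∀ j, c j < h := fun j => carry_lt y hg (by omega) j
  have hc0 : c 0 = 0 := carry_zero y
  have hDoff : ∀ j i, cl i ≠ cls j → D i j = 0 := by
    intro j i hne
    apply hD0
    intro hjW
    exact (Set.disjoint_left.mp (hdisj (cl i) (hcllt i) (cls j) (hclslt j) hne) hjW) (hclsmem j)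
  -- Step A : each class other than r₀ is represented
  have hStepA : ∀ s, s < h → s ≠ r₀ → ∃ i, cl i = s := by
    intro s hs hsr
    obtain ⟨p, hp1, hp2, hpt⟩ := hpair s hs hsr
    by_contra hno
    push_neg at hno
    have hpnot : p ∉ W r₀ := fun hmem =>
      (Set.disjoint_left.mp (hdisj s hs r₀ hr₀ hsr) hp1) hmem
    have hp1not : p + 1 ∉ W r₀ := fun hmem =>
      (Set.disjoint_left.mp (hdisj s hs r₀ hr₀ hsr) hp2) hmem
    have hDzero : ∀ i, D i p = 0 := by
      intro i
      apply hD0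
      intro hmem
      exact (Set.disjoint_left.mp (hdisj (cl i) (hcllt i) s hs (hno i)) hmem) hp1
    have hDzero1 : ∀ i, D i (p+1) = 0 := by
      intro i
      apply hD0
      intro hmem
      exact (Set.disjoint_left.mp (hdisj (cl i) (hcllt i) s hs (hno i)) hmem) hp2
    have e1 := hcol p
    have e2 := hcol (p+1)
    rw [Finset.sum_eq_zero (fun i _ => hDzero i)] at e1
    rw [Finset.sum_eq_zero (fun i _ => hDzero1 i)] at e2
    rw [hd3 p (by omega) hpnot] at e1
    rw [hd3 (p+1) hpt hp1not] at e2
    -- e1 : g-1 + g * c (p+1) = c p ;  e2 : g-1 + g * c (p+2) = c (p+1)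
    have h1 := hclt p
    have h2 : g - 1 ≤ c (p+1) := by omega
    have hmul : g * (g - 1) ≤ g * c (p+1) := Nat.mul_le_mul_left g h2
    have hgg : g * (g - 1) = g * g - g := by rw [Nat.mul_sub, mul_one]
    rw [hg2] at hhg
    omega
  by_cases hcase : ∃ i, cl i = r₀
  · -- Case 1: every class is represented exactly once
    have hsurj : ∀ s, s < h → ∃ i, cl i = s := by
      intro s hs
      by_cases hsr : s = r₀
      · subst hsr; exact hcase
      · exact hStepA s hs hsr
    set cl' : Fin h → Fin h := fun i => ⟨cl i, hcllt i⟩ with hcl'def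
    have hsurj' : Function.Surjective cl' := by
      intro v
      obtain ⟨i, hi⟩ := hsurj v.1 v.2
      exact ⟨i, Fin.ext hi⟩
    have hinj : Function.Injective cl' := Finite.injective_iff_surjective.mpr hsurj'
    have huniqD : ∀ j (i0 : Fin h), cl i0 = cls j → ∑ i, D i j = D i0 j := by
      intro j i0 h0
      apply Finset.sum_eq_single i0
      · intro i _ hne
        apply hDoff
        intro hcli
        apply hne
        apply hinj
        apply Fin.ext
        simp only [hcl'def]
        rw [hcli, h0]
      · intro hni
        exact absurd (Finset.mem_univ i0) hni
    have hczero : ∀ j, c j = 0 := by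
      intro j
      induction j with
      | zero => exact hc0
      | succ j ih =>
        obtain ⟨i0, hi0⟩ := hsurj (cls j) (hclslt j)
        have e := hcol j
        rw [ih, huniqD j i0 hi0] at e
        have hb := hDlt i0 j
        have hdisj2 : c (j+1) = 0 ∨ g ≤ g * c (j+1) := by
          rcases Nat.eq_zero_or_pos (c (j+1)) with hz | hz
          · exact Or.inl hz
          · exact Or.inr (Nat.le_mul_of_pos_right g hz)
        omega
    have hdigeq : ∀ j, N / g ^ j % g = ∑ i, D i j := by
      intro j
      have e := hcol j
      rw [hczero j, hczero (j+1)] at e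
      simpa using e
    obtain ⟨i0, hi0⟩ := hcase
    refine ⟨i0, ?_⟩
    have hyd : ∀ j, y i0 / g ^ j % g = (if j ∈ Fs then a j else 0) := by
      intro j
      by_cases hjW : j ∈ W r₀
      · have hclsj : cls j = r₀ := hcls_unique j r₀ hr₀ hjW
        have hDi : ∑ i, D i j = D i0 j := huniqD j i0 (by rw [hclsj, hi0])
        have hnj := hdigeq j
        rw [hDi] at hnj
        by_cases hjF : j ∈ Fs
        · rw [if_pos hjF, ← hd1 j hjF, hnj]
        · rw [if_neg hjF, ← hd2 j hjW hjF, hnj]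
      · have hz : D i0 j = 0 := hD0 i0 j (by rw [hi0]; exact hjW)
        have hjF : j ∉ Fs := fun hf => hjW (hFW hf)
        rw [if_neg hjF]
        exact hz
    have hyle : y i0 ≤ N := by
      rw [← hsum]
      exact Finset.single_le_sum (f := fun i => y i) (fun i _ => Nat.zero_le _) (Finset.mem_univ i0)
    have hylt : y i0 < g ^ t := lt_of_le_of_lt hyle hNlt
    rw [expand_to_range Fs a t hFt]
    conv_lhs => rw [self_digit_sum hg t (y i0) hylt]
    apply Finset.sum_congr rfl
    intro j _
    rw [hyd j]
  · -- Case 2: no summand has class r₀ — contradiction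
    exfalso
    push_neg at hcase
    have hfibcard : ∀ r, (Finset.univ.filter (fun i => cl i = r)).card ≤ 2 := by
      intro r
      by_cases hr : r < h ∧ r ≠ r₀
      · have htot : (h : ℕ) = ∑ r' ∈ Finset.range h,
            (Finset.univ.filter (fun i => cl i = r')).card := by
          have := Finset.card_eq_sum_card_fiberwise
            (f := cl) (s := (Finset.univ : Finset (Fin h))) (t := Finset.range h)
            (fun i _ => Finset.mem_range.mpr (hcllt i))
          simpa using this
        set S := ((Finset.range h).erase r₀).erase r with hSdef
        have hSsub : insert r S ⊆ Finset.range h := by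
          intro x hx
          rcases Finset.mem_insert.mp hx with rfl | hx
          · exact Finset.mem_range.mpr hr.1
          · exact Finset.mem_of_mem_erase (Finset.mem_of_mem_erase hx)
        have hrS : r ∉ S := fun hx => (Finset.notMem_erase r _) hx
        have hScard : h - 2 ≤ S.card := by
          have h1 : ((Finset.range h).erase r₀).card - 1 ≤ S.card :=
            Finset.pred_card_le_card_erase
          have h2 : (Finset.range h).card - 1 ≤ ((Finset.range h).erase r₀).card :=
            Finset.pred_card_le_card_erase
          rw [Finset.card_range] at h2
          omega
        have hge : ∑ r' ∈ Finset.range h, (Finset.univ.filter (fun i => cl i = r')).card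
            ≥ (Finset.univ.filter (fun i => cl i = r)).card + ∑ r' ∈ S, 1 := by
          calc ∑ r' ∈ Finset.range h, (Finset.univ.filter (fun i => cl i = r')).card
              ≥ ∑ r' ∈ insert r S, (Finset.univ.filter (fun i => cl i = r')).card :=
                Finset.sum_le_sum_of_subset hSsub
            _ = (Finset.univ.filter (fun i => cl i = r)).card
                + ∑ r' ∈ S, (Finset.univ.filter (fun i => cl i = r')).card :=
                Finset.sum_insert hrS
            _ ≥ (Finset.univ.filter (fun i => cl i = r)).card + ∑ r' ∈ S, 1 := by
                apply Nat.add_le_add_left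
                apply Finset.sum_le_sum
                intro r' hr'
                have hr'h : r' < h := Finset.mem_range.mp
                  (Finset.mem_of_mem_erase (Finset.mem_of_mem_erase hr'))
                have hr'r₀ : r' ≠ r₀ := Finset.ne_of_mem_erase (Finset.mem_of_mem_erase hr')
                obtain ⟨i, hi⟩ := hStepA r' hr'h hr'r₀
                rw [Nat.succ_le_iff, Finset.card_pos]
                exact ⟨i, Finset.mem_filter.mpr ⟨Finset.mem_univ i, hi⟩⟩
        rw [Finset.sum_const, smul_eq_mul, mul_one] at hge
        omega
      · push_neg at hr
        by_cases hrh : r < h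
        · have hrr₀ : r = r₀ := hr hrh
          have : (Finset.univ.filter (fun i => cl i = r)) = ∅ := by
            apply Finset.filter_eq_empty_iff.mpr
            intro i _
            rw [hrr₀]
            exact hcase i
          rw [this]
          simp
        · have : (Finset.univ.filter (fun i => cl i = r)) = ∅ := by
            apply Finset.filter_eq_empty_iff.mpr
            intro i _
            intro heq
            exact hrh (heq ▸ hcllt i)
          rw [this]
          simp
    have hsumD2 : ∀ j, ∑ i, D i j ≤ 2 * (g - 1) := by
      intro j
      have hsub : ∑ i, D i j = ∑ i ∈ Finset.univ.filter (fun i => cl i = cls j), D i j := by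
        symm
        apply Finset.sum_subset (Finset.filter_subset _ _)
        intro i _ hni
        apply hDoff
        intro heq
        exact hni (Finset.mem_filter.mpr ⟨Finset.mem_univ i, heq⟩)
      rw [hsub]
      calc ∑ i ∈ Finset.univ.filter (fun i => cl i = cls j), D i j
          ≤ (Finset.univ.filter (fun i => cl i = cls j)).card • (g - 1) :=
            Finset.sum_le_card_nsmul _ _ _ (fun i _ => by have := hDlt i j; omega)
        _ ≤ 2 * (g - 1) := by
            rw [smul_eq_mul]
            exact Nat.mul_le_mul_right _ (hfibcard (cls j))
    set f0 := Fs.min' hFne with hf0def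
    have hf0mem : f0 ∈ Fs := Fs.min'_mem hFne
    have hf0t : f0 < t := hFt f0 hf0mem
    have hzero : ∀ j, j ≤ f0 → c j = 0 := by
      intro j
      induction j with
      | zero => intro _; exact hc0
      | succ j ih =>
        intro hj
        have hcj : c j = 0 := ih (by omega)
        have e := hcol j
        rw [hcj] at e
        have hdisj2 : c (j+1) = 0 ∨ g ≤ g * c (j+1) := by
          rcases Nat.eq_zero_or_pos (c (j+1)) with hz | hz
          · exact Or.inl hz
          · exact Or.inr (Nat.le_mul_of_pos_right g hz)
        by_cases hjW : j ∈ W r₀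
        · have hall : ∑ i, D i j = 0 := Finset.sum_eq_zero (fun i _ => by
            apply hDoff
            rw [hcls_unique j r₀ hr₀ hjW]
            exact hcase i)
          rw [hall] at e
          omega
        · have hnj := hd3 j (by omega) hjW
          rw [hnj] at e
          have hb := hsumD2 j
          omega
    have e := hcol f0
    rw [hzero f0 le_rfl] at e
    have hall : ∑ i, D i f0 = 0 := Finset.sum_eq_zero (fun i _ => by
      apply hDoff
      rw [hcls_unique f0 r₀ hr₀ (hFW hf0mem)]
      exact hcase i)
    rw [hall, hd1 f0 hf0mem] at e
    have ha1 := (ha f0 hf0mem).1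
    omega

/-! ### Basis part -/

private lemma mem_A_iff {g h : ℕ} (W : ℕ → Set ℕ) {x : ℕ} :
    x ∈ (⋃ r ∈ Finset.range h, AgSet g (W r)) ↔ ∃ r, r < h ∧ x ∈ AgSet g (W r) := by
  simp [Finset.mem_range]

private lemma single_mem {g h : ℕ} (hg : 2 ≤ g) (W : ℕ → Set ℕ) {s w cv : ℕ}
    (hs : s < h) (hw : w ∈ W s) (h1 : 1 ≤ cv) (h2 : cv ≤ g - 1) :
    cv * g ^ w ∈ (⋃ r ∈ Finset.range h, AgSet g (W r)) := by
  rw [mem_A_iff]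
  refine ⟨s, hs, {w}, Finset.singleton_nonempty w, by simpa using hw, fun _ => cv, ?_, by simp⟩
  intro f hf
  exact ⟨h1, h2⟩

private lemma split_mem {g h : ℕ} (hg : 2 ≤ g) (hh : 2 ≤ h) (W : ℕ → Set ℕ)
    (hcover : (⋃ r ∈ Finset.range h, W r) = Set.univ)
    {x : ℕ} (hx : x ∈ (⋃ r ∈ Finset.range h, AgSet g (W r))) (h2x : 2 ≤ x) :
    ∃ u v, u ∈ (⋃ r ∈ Finset.range h, AgSet g (W r)) ∧
      v ∈ (⋃ r ∈ Finset.range h, AgSet g (W r)) ∧ u + v = x := by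
  classical
  obtain ⟨r, hr, F, hFne, hFW, a, ha, rfl⟩ := (mem_A_iff W).mp hx
  by_cases hex : ∃ f ∈ F, 2 ≤ a f
  · obtain ⟨f, hfF, hf2⟩ := hex
    refine ⟨1 * g ^ f, (a f - 1) * g ^ f + ∑ f' ∈ F.erase f, a f' * g ^ f', ?_, ?_, ?_⟩
    · exact single_mem hg W hr (hFW hfF) le_rfl (by omega)
    · rw [mem_A_iff]
      refine ⟨r, hr, F, hFne, hFW, Function.update a f (a f - 1), ?_, ?_⟩
      · intro f' hf'
        by_cases hff : f' = f
        · subst hff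
          rw [Function.update_self]
          have := (ha f' hf').2
          omega
        · rw [Function.update_of_ne hff]
          exact ha f' hf'
      · rw [← Finset.add_sum_erase F (fun f' => Function.update a f (a f - 1) f' * g ^ f') hfF,
          Function.update_self]
        congr 1
        apply Finset.sum_congr rfl
        intro f' hf'
        rw [Function.update_of_ne (Finset.ne_of_mem_erase hf')]
    · rw [← Finset.add_sum_erase F (fun f' => a f' * g ^ f') hfF]
      have h1 := (ha f hfF).1
      have hsplit : 1 * g ^ f + (a f - 1) * g ^ f = a f * g ^ f := by
        rw [← Nat.add_mul]
        congr 1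
        omega
      omega
  · push_neg at hex
    have hall1 : ∀ f ∈ F, a f = 1 := by
      intro f hf
      have := (ha f hf).1
      have := hex f hf
      omega
    by_cases hcard : 2 ≤ F.card
    · obtain ⟨f, hfF⟩ := hFne
      have hene : (F.erase f).Nonempty := by
        rw [← Finset.card_pos, Finset.card_erase_of_mem hfF]
        omega
      refine ⟨a f * g ^ f, ∑ f' ∈ F.erase f, a f' * g ^ f', ?_, ?_, ?_⟩
      · exact single_mem hg W hr (hFW hfF) (ha f hfF).1 (ha f hfF).2
      · rw [mem_A_iff]
        exact ⟨r, hr, F.erase f, hene, fun x hx => hFW (Finset.mem_of_mem_erase hx),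
          a, fun f' hf' => ha f' (Finset.mem_of_mem_erase hf'), rfl⟩
      · exact Finset.add_sum_erase F (fun f' => a f' * g ^ f') hfF
    · -- F is a singleton {f}, a f = 1, so x = g ^ f with f ≥ 1
      have hcard1 : F.card = 1 := by
        have := Finset.card_pos.mpr hFne
        omega
      obtain ⟨f, rfl⟩ := Finset.card_eq_one.mp hcard1
      have hfF : f ∈ ({f} : Finset ℕ) := Finset.mem_singleton_self f
      have hxeq : ∑ f' ∈ ({f} : Finset ℕ), a f' * g ^ f' = g ^ f := by
        rw [Finset.sum_singleton, hall1 f hfF, one_mul]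
      rw [hxeq] at h2x ⊢
      have hf1 : 1 ≤ f := by
        by_contra hf0
        have : f = 0 := by omega
        rw [this] at h2x
        simp at h2x
      obtain ⟨f', rfl⟩ : ∃ f', f = f' + 1 := ⟨f - 1, by omega⟩
      have hclse : ∃ s, s < h ∧ f' ∈ W s := by
        have hj : f' ∈ (⋃ r ∈ Finset.range h, W r) := by rw [hcover]; trivial
        simpa [Finset.mem_range] using hj
      obtain ⟨s, hsh, hsW⟩ := hclse
      refine ⟨1 * g ^ f', (g - 1) * g ^ f', ?_, ?_, ?_⟩
      · exact single_mem hg W hsh hsW le_rfl (by omega)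
      · exact single_mem hg W hsh hsW (by omega) le_rfl
      · rw [← Nat.add_mul]
        have hgeq : 1 + (g - 1) = g := by omega
        rw [hgeq, pow_succ, mul_comm]

private lemma decomp {g h : ℕ} (hg : 2 ≤ g) (hh : 2 ≤ h) (W : ℕ → Set ℕ)
    (hcover : (⋃ r ∈ Finset.range h, W r) = Set.univ)
    (hdisj : ∀ r < h, ∀ s < h, r ≠ s → Disjoint (W r) (W s))
    {n : ℕ} (hn : 1 ≤ n) :
    ∃ m : Multiset ℕ, (∀ x ∈ m, x ∈ (⋃ r ∈ Finset.range h, AgSet g (W r))) ∧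
      m.card ≤ h ∧ m.sum = n := by
  classical
  have hclse : ∀ j : ℕ, ∃ r, r < h ∧ j ∈ W r := by
    intro j
    have hj : j ∈ (⋃ r ∈ Finset.range h, W r) := by rw [hcover]; trivial
    simpa [Finset.mem_range] using hj
  choose cls hclslt hclsmem using hclse
  set d : ℕ → ℕ := fun j => n / g ^ j % g with hddef
  have hself : n = ∑ j ∈ Finset.range n, d j * g ^ j :=
    self_digit_sum hg n n (Nat.lt_pow_self (by omega))
  set D : Finset ℕ := (Finset.range n).filter (fun j => d j ≠ 0) with hDdef
  have hsumD : ∑ j ∈ D, d j * g ^ j = n := by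
    rw [hDdef]
    rw [Finset.sum_filter_of_ne]
    · exact hself.symm
    · intro x _ hx h0
      exact hx (by rw [h0, zero_mul])
  set part : ℕ → ℕ := fun r => ∑ j ∈ D.filter (fun j => cls j = r), d j * g ^ j with hpartdef
  set R : Finset ℕ := (Finset.range h).filter
    (fun r => (D.filter (fun j => cls j = r)).Nonempty) with hRdef
  refine ⟨R.val.map part, ?_, ?_, ?_⟩
  · intro x hx
    obtain ⟨r, hrR, rfl⟩ := Multiset.mem_map.mp hx
    have hrR' : r ∈ R := hrR
    rw [hRdef, Finset.mem_filter, Finset.mem_range] at hrR'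
    rw [mem_A_iff]
    refine ⟨r, hrR'.1, D.filter (fun j => cls j = r), hrR'.2, ?_, d, ?_, rfl⟩
    · intro j hj
      simp only [Finset.coe_filter, Set.mem_setOf_eq] at hj
      rw [← hj.2]
      exact hclsmem j
    · intro j hj
      rw [Finset.mem_filter] at hj
      have hj2 := (Finset.mem_filter.mp hj.1).2
      constructor
      · omega
      · have : d j < g := Nat.mod_lt _ (by omega)
        omega
  · rw [Multiset.card_map]
    have hRc : R.card ≤ h := by
      calc R.card ≤ (Finset.range h).card := by
            rw [hRdef]; exact Finset.card_filter_le _ _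
        _ = h := Finset.card_range h
    exact hRc
  · have hms : (R.val.map part).sum = ∑ r ∈ R, part r := rfl
    rw [hms]
    have hRfull : ∑ r ∈ R, part r = ∑ r ∈ Finset.range h, part r := by
      apply Finset.sum_subset (Finset.filter_subset _ _)
      intro r _ hrR
      rw [Finset.mem_filter, not_and] at hrR
      simp only [hpartdef]
      by_cases hrh : r ∈ Finset.range h
      · have := hrR hrh
        rw [Finset.not_nonempty_iff_eq_empty] at this
        rw [this, Finset.sum_empty]
      · exact absurd ‹r ∈ Finset.range h› hrh
    rw [hRfull]
    simp only [hpartdef]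
    rw [Finset.sum_fiberwise_of_maps_to (fun j _ => Finset.mem_range.mpr (hclslt j))]
    exact hsumD

private lemma grow {g h : ℕ} (hg : 2 ≤ g) (hh : 2 ≤ h) (W : ℕ → Set ℕ)
    (hcover : (⋃ r ∈ Finset.range h, W r) = Set.univ) :
    ∀ dd (m : Multiset ℕ), (∀ x ∈ m, x ∈ (⋃ r ∈ Finset.range h, AgSet g (W r))) →
      m.card + dd = h → h ≤ m.sum →
      m.sum ∈ FoldSum h (⋃ r ∈ Finset.range h, AgSet g (W r)) := by
  classical
  intro dd
  induction dd with
  | zero =>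
    intro m hmem hcard _
    rw [Nat.add_zero] at hcard
    set l := m.toList with hldef
    have hlen : l.length = h := by rw [hldef, Multiset.length_toList]; exact hcard
    refine ⟨fun i => l.get (Fin.cast hlen.symm i), fun i => ?_, ?_⟩
    · apply hmem
      have hmem' : l.get (Fin.cast hlen.symm i) ∈ l := by apply List.get_mem
      have hml : ∀ x, x ∈ l → x ∈ m := by
        intro x hx
        rw [hldef] at hx
        exact Multiset.mem_toList.mp hx
      exact hml _ hmem'
    · rw [← Multiset.sum_toList, ← hldef, ← Fin.sum_univ_getElem]
      refine (Fintype.sum_bijective (Fin.cast hlen.symm)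
        ⟨fun x y hxy => Fin.ext (by simpa using congrArg Fin.val hxy),
         fun z => ⟨Fin.cast hlen z, by apply Fin.ext; simp⟩⟩
        (fun i => l.get (Fin.cast hlen.symm i)) (fun j => l[(j : ℕ)]) (fun i => rfl)).symm
  | succ dd ih =>
    intro m hmem hcard hsum
    have hcardpos : 1 ≤ m.card := by
      by_contra hc
      have : m.card = 0 := by omega
      rw [Multiset.card_eq_zero] at this
      rw [this] at hsum
      simp at hsum
      omega
    obtain ⟨x, hxm, hx2⟩ : ∃ x ∈ m, 2 ≤ x := by
      by_contra hno
      push_neg at hno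
      have : m.sum ≤ m.card • 1 := Multiset.sum_le_card_nsmul m 1 (fun x hx => by
        have := hno x hx; omega)
      rw [smul_eq_mul, mul_one] at this
      omega
    obtain ⟨u, v, hu, hv, huv⟩ := split_mem hg hh W hcover (hmem x hxm) hx2
    have hmer : x ::ₘ m.erase x = m := Multiset.cons_erase hxm
    have hsum_er : x + (m.erase x).sum = m.sum := by
      conv_rhs => rw [← hmer]
      rw [Multiset.sum_cons]
    set m' := u ::ₘ v ::ₘ m.erase x with hm'def
    have hm'sum : m'.sum = m.sum := by
      rw [hm'def, Multiset.sum_cons, Multiset.sum_cons, ← hsum_er, ← huv]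
      ring
    have hm'card : m'.card = m.card + 1 := by
      rw [hm'def, Multiset.card_cons, Multiset.card_cons, Multiset.card_erase_of_mem hxm]
      simp only [Nat.pred_eq_sub_one]
      omega
    have hm'mem : ∀ z ∈ m', z ∈ (⋃ r ∈ Finset.range h, AgSet g (W r)) := by
      intro z hz
      rw [hm'def] at hz
      rcases Multiset.mem_cons.mp hz with rfl | hz
      · exact hu
      · rcases Multiset.mem_cons.mp hz with rfl | hz
        · exact hv
        · exact hmem z (Multiset.mem_of_mem_erase hz)
    rw [← hm'sum]
    exact ih m' hm'mem (by omega) (by omega)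

/-! ### Main theorem -/

/-- Let `g ≥ 2` and `2 ≤ h < g ^ 2`. If ℕ is partitioned into pairwise
disjoint infinite sets `W 0, …, W (h-1)` such that every `w ∈ W r` has `w - 1 ∈ W r` or
`w + 1 ∈ W r`, then `A = A_g(W 0) ∪ ⋯ ∪ A_g(W (h-1))` is a minimal asymptotic basis of
order `h`. -/
theorem stmt6 (g h : ℕ) (hg : 2 ≤ g) (hh : 2 ≤ h) (hhg : h < g ^ 2)
    (W : ℕ → Set ℕ)
    (hcover : (⋃ r ∈ Finset.range h, W r) = Set.univ)
    (hdisj : ∀ r < h, ∀ s < h, r ≠ s → Disjoint (W r) (W s))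
    (hinf : ∀ r < h, (W r).Infinite)
    (hnb : ∀ r < h, ∀ w ∈ W r, (∃ v : ℕ, v + 1 = w ∧ v ∈ W r) ∨ w + 1 ∈ W r) :
    IsMinimalAsymptoticBasis h (⋃ r ∈ Finset.range h, AgSet g (W r)) := by
  classical
  constructor
  · -- asymptotic basis
    rw [IsAsymptoticBasis, Filter.eventually_atTop]
    refine ⟨h, fun n hn => ?_⟩
    obtain ⟨m, hmem, hcard, hsum⟩ := decomp hg hh W hcover hdisj (show 1 ≤ n by omega)
    rw [← hsum]
    exact grow hg hh W hcover (h - m.card) m hmem (by omega) (by omega)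
  · -- minimality
    intro B hB hbasis
    obtain ⟨astar, haA, haB⟩ := Set.exists_of_ssubset hB
    obtain ⟨r₀, hr₀, Fs, hFne, hFW, a, ha, hastar⟩ := (mem_A_iff W).mp haA
    rw [IsAsymptoticBasis, Filter.eventually_atTop] at hbasis
    obtain ⟨n₀, hn₀⟩ := hbasis
    -- an adjacent pair inside each W s, s ≠ r₀
    have hpair_ex : ∀ s : ℕ, ∃ p, s < h → s ≠ r₀ → (p ∈ W s ∧ p + 1 ∈ W s) := by
      intro s
      by_cases hs : s < h
      · obtain ⟨w, hw, hwpos⟩ := (hinf s hs).exists_gt 0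
        rcases hnb s hs w hw with ⟨v, hv1, hv2⟩ | hup
        · exact ⟨v, fun _ _ => ⟨hv2, by rw [hv1]; exact hw⟩⟩
        · exact ⟨w, fun _ _ => ⟨hw, hup⟩⟩
      · exact ⟨0, fun h1 _ => absurd h1 hs⟩
    choose pa hpa using hpair_ex
    -- a class different from r₀ and a large element of it
    set s1 : ℕ := if r₀ = 0 then 1 else 0 with hs1def
    have hs1 : s1 < h ∧ s1 ≠ r₀ := by
      rw [hs1def]
      split <;> omega
    obtain ⟨j0, hj0W, hj0gt⟩ := (hinf s1 hs1.1).exists_gt n₀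
    have hj0r₀ : j0 ∉ W r₀ := fun hmem =>
      (Set.disjoint_left.mp (hdisj s1 hs1.1 r₀ hr₀ hs1.2) hj0W) hmem
    set t : ℕ := max (max ((Fs.sup id) + 1) (j0 + 1)) (((Finset.range h).sup pa) + 2) with htdef
    have hFt : ∀ f ∈ Fs, f < t := by
      intro f hf
      have h1 : f ≤ Fs.sup id := Finset.le_sup (f := id) hf
      have h2 : (Fs.sup id) + 1 ≤ t := le_trans (le_max_left _ _) (le_max_left _ _)
      omega
    have hj0t : j0 < t := by
      have h2 : j0 + 1 ≤ t := le_trans (le_max_right _ _) (le_max_left _ _)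
      omega
    have hpat : ∀ s, s < h → pa s + 2 ≤ t := by
      intro s hs
      have h1 : pa s ≤ (Finset.range h).sup pa := Finset.le_sup (Finset.mem_range.mpr hs)
      have h2 : ((Finset.range h).sup pa) + 2 ≤ t := le_max_right _ _
      omega
    set nb : ℕ → ℕ := fun j => if j ∈ Fs then a j else if j ∈ W r₀ then 0 else g - 1
      with hnbdef
    have hnblt : ∀ j, nb j < g := by
      intro j
      rw [hnbdef]
      dsimp only
      split
      · have := (ha j ‹j ∈ Fs›).2
        omega
      · split <;> omega
    set N : ℕ := ∑ j ∈ Finset.range t, nb j * g ^ j with hNdef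
    have hNd : ∀ j, N / g ^ j % g = if j < t then nb j else 0 := by
      intro j
      rw [hNdef]
      exact digit_sum hg t nb hnblt j
    have hNlt : N < g ^ t := by
      rw [hNdef]
      exact sum_lt_pow hg nb hnblt t
    have hNge : n₀ ≤ N := by
      have hj0F : j0 ∉ Fs := fun hf => hj0r₀ (hFW hf)
      have hterm : nb j0 * g ^ j0 ≤ N := by
        rw [hNdef]
        exact Finset.single_le_sum (f := fun j => nb j * g ^ j)
          (fun i _ => Nat.zero_le _) (Finset.mem_range.mpr hj0t)
      have hnbj0 : nb j0 = g - 1 := by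
        rw [hnbdef]
        simp [hj0F, hj0r₀]
      have hpow : j0 < g ^ j0 := Nat.lt_pow_self (by omega)
      have : g ^ j0 ≤ nb j0 * g ^ j0 := by
        rw [hnbj0]
        have : 1 ≤ g - 1 := by omega
        exact Nat.le_mul_of_pos_left _ (by omega)
      omega
    obtain ⟨x, hx, hxsum⟩ := hn₀ N hNge
    have hxA : ∀ i, x i ∈ (⋃ r ∈ Finset.range h, AgSet g (W r)) := fun i => hB.subset (hx i)
    have hcore := core hg hh hhg W hcover hdisj hr₀ Fs hFne hFW a ha t hFt
      (fun s hs hsr => by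
        obtain ⟨hp1, hp2⟩ := hpa s hs hsr
        exact ⟨pa s, hp1, hp2, by have := hpat s hs; omega⟩)
      N hNlt
      (fun f hf => by
        rw [hNd f, if_pos (hFt f hf), hnbdef]
        simp [hf])
      (fun j hjW hjF => by
        rw [hNd j]
        split
        · rw [hnbdef]
          simp [hjF, hjW]
        · rfl)
      (fun j hjt hjW => by
        have hjF : j ∉ Fs := fun hf => hjW (hFW hf)
        rw [hNd j, if_pos hjt, hnbdef]
        simp [hjF, hjW])
      x hxA hxsum.symm
    obtain ⟨i, hi⟩ := hcore
    apply haB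
    rw [hastar, ← hi]
    exact hx i
end
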